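/- arXiv:1711.06006 — 5 statements merged into one kernel-verified Lean document; each statement's English description precedes it below -/
import Mathlib

section
/- Goal-conditional policy gradient theorem: the gradient of the expected return η(θ) = Σ_g p(g) Σ_τ p(τ | g, θ) Σ_{t=1}^T r(s_t, g) with respect to θ equals Σ_g p(g) Σ_τ p(τ | g, θ) Σ_{t=1}^{T−1} ∇ log p(a_t | s_t, g, θ) Σ_{t'=t+1}^T r(s_{t'}, g); that is, terms pairing rewards with score functions at the same or later time steps vanish. -/
open Finset

/-- A trajectory `s_1, a_1, …, s_T` with horizon `T = n + 1`. -/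
abbrev Traj (S A : Type) (n : ℕ) := (Fin (n + 1) → S) × (Fin n → A)

/-- `p(τ ∣ g, θ) = p(s_1) ∏_{t=1}^{T-1} p(a_t ∣ s_t, g, θ) p(s_{t+1} ∣ s_t, a_t)`. -/
def trajProb {S A G : Type} (n : ℕ) (init : S → ℝ) (trans : S → A → S → ℝ)
    (pol : ℝ → G → S → A → ℝ) (θ : ℝ) (g : G) (τ : Traj S A n) : ℝ :=
  init (τ.1 0) * ∏ t : Fin n,
    pol θ g (τ.1 t.castSucc) (τ.2 t) * trans (τ.1 t.castSucc) (τ.2 t) (τ.1 t.succ)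

/-- The expected return `η(θ) = ∑_g p(g) ∑_τ p(τ ∣ g, θ) ∑_{t=1}^T r(s_t, g)`. -/
def expReturn {S A G : Type} [Fintype S] [Fintype A] [Fintype G] (n : ℕ)
    (init : S → ℝ) (trans : S → A → S → ℝ) (pol : ℝ → G → S → A → ℝ)
    (pG : G → ℝ) (r : S → G → ℝ) (θ : ℝ) : ℝ :=
  ∑ g : G, pG g * ∑ τ : Traj S A n,
    trajProb n init trans pol θ g τ * ∑ t : Fin (n + 1), r (τ.1 t) g

/-! Differentiating the product that defines `p(τ ∣ g, θ)` gives one term per step `t`, in which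
the policy factor at `t` is replaced by its derivative; by the log-derivative trick this term is
`p(τ ∣ g, θ) ∇ log p(a_t ∣ s_t, g, θ)`. Read as a path weight, it has step kernels that are
stochastic after `t` and of mass `∑_a ∇ p(a ∣ s, g, θ) = 0` at `t`. Pushing an initial weight
forward through the steps preserves its total mass at stochastic steps and kills it at step `t`,
so the path sum vanishes. A reward `r(s_{t'})` with `t' ≤ t` can be absorbed into the kernel at
step `t'` without changing either property, hence it does not contribute to the gradient. -/

namespace Traj

variable {S A : Type} {n : ℕ}

def pathWeight (w : S → ℝ) (k : Fin n → S → A → S → ℝ) (τ : Traj S A n) : ℝ :=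
  w (τ.1 0) * ∏ u : Fin n, k u (τ.1 u.castSucc) (τ.2 u) (τ.1 u.succ)

lemma trajProb_eq_pathWeight {G : Type} (init : S → ℝ) (trans : S → A → S → ℝ)
    (pol : ℝ → G → S → A → ℝ) (θ : ℝ) (g : G) :
    trajProb n init trans pol θ g =
      pathWeight init (fun _ s a s' => pol θ g s a * trans s a s') :=
  rfl

/-- The step kernels of the `t`-th term of the product rule for `p(τ ∣ g, θ)`. -/
def derivKernel (p d : S → A → ℝ) (trans : S → A → S → ℝ) (t : Fin n) :
    Fin n → S → A → S → ℝ :=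
  fun u s a s' => (if u = t then d s a else p s a) * trans s a s'

lemma prod_derivKernel (p d : S → A → ℝ) (trans : S → A → S → ℝ) (t : Fin n)
    (τ : Traj S A n) :
    ∏ u, derivKernel p d trans t u (τ.1 u.castSucc) (τ.2 u) (τ.1 u.succ) =
      (∏ u ∈ univ.erase t,
        p (τ.1 u.castSucc) (τ.2 u) * trans (τ.1 u.castSucc) (τ.2 u) (τ.1 u.succ)) *
        (d (τ.1 t.castSucc) (τ.2 t) * trans (τ.1 t.castSucc) (τ.2 t) (τ.1 t.succ)) := by
  rw [← prod_erase_mul _ _ (mem_univ t)]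
  congr 1
  · exact prod_congr rfl fun u hu => by simp [derivKernel, (mem_erase.mp hu).1]
  · simp [derivKernel]

lemma hasDerivAt_pathWeight {p : ℝ → S → A → ℝ} {d : S → A → ℝ} {θ : ℝ}
    (hp : ∀ s a, HasDerivAt (p · s a) (d s a) θ) (w : S → ℝ) (trans : S → A → S → ℝ)
    (τ : Traj S A n) :
    HasDerivAt (fun θ => pathWeight w (fun _ s a s' => p θ s a * trans s a s') τ)
      (∑ t, pathWeight w (derivKernel (p θ) d trans t) τ) θ := by
  have hprod := HasDerivAt.fun_finsetProd (u := univ) fun t _ =>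
    (hp (τ.1 t.castSucc) (τ.2 t)).mul_const (trans (τ.1 t.castSucc) (τ.2 t) (τ.1 t.succ))
  simpa only [pathWeight, prod_derivKernel, smul_eq_mul, mul_sum] using
    hprod.const_mul (w (τ.1 0))

lemma pathWeight_mul_div_eq_derivKernel (p d : S → A → ℝ) (trans : S → A → S → ℝ)
    (w : S → ℝ) (t : Fin n) (τ : Traj S A n) (hp : p (τ.1 t.castSucc) (τ.2 t) ≠ 0) :
    pathWeight w (fun _ s a s' => p s a * trans s a s') τ *
        (d (τ.1 t.castSucc) (τ.2 t) / p (τ.1 t.castSucc) (τ.2 t)) =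
      pathWeight w (derivKernel p d trans t) τ := by
  rw [pathWeight, pathWeight, prod_derivKernel, ← prod_erase_mul _ _ (mem_univ t)]
  field_simp

variable [Fintype S] [Fintype A]

def pushWeight (w : S → ℝ) (k : S → A → S → ℝ) (s' : S) : ℝ :=
  ∑ s, ∑ a, w s * k s a s'

lemma sum_pushWeight (w : S → ℝ) (k : S → A → S → ℝ) :
    ∑ s', pushWeight w k s' = ∑ s, w s * ∑ a, ∑ s', k s a s' := by
  simp only [pushWeight, mul_sum]
  rw [sum_comm]
  exact sum_congr rfl fun _ _ => sum_comm

lemma sum_pathWeight_zero (w : S → ℝ) (k : Fin 0 → S → A → S → ℝ) :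
    ∑ τ : Traj S A 0, pathWeight w k τ = ∑ s, w s := by
  rw [← Equiv.sum_comp ((Equiv.funUnique (Fin 1) S).symm.prodCongr (Equiv.refl _))]
  simp [pathWeight, Fintype.sum_prod_type]

lemma sum_pathWeight_succ (w : S → ℝ) (k : Fin (n + 1) → S → A → S → ℝ) :
    ∑ τ : Traj S A (n + 1), pathWeight w k τ =
      ∑ τ : Traj S A n, pathWeight (pushWeight w (k 0)) (fun u => k u.succ) τ := by
  rw [← Equiv.sum_comp ((Fin.consEquiv fun _ => S).prodCongr (Fin.consEquiv fun _ => A))]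
  simp only [Fintype.sum_prod_type, Equiv.prodCongr_apply, Prod.map, Fin.consEquiv_apply,
    pathWeight, pushWeight, Fin.prod_univ_succ, Fin.cons_zero, Fin.cons_succ, Fin.castSucc_zero,
    ← Fin.succ_castSucc, sum_mul, mul_assoc]
  rw [sum_comm]
  exact sum_congr rfl fun _ _ => (sum_congr rfl fun _ _ => sum_comm).trans sum_comm

lemma sum_pathWeight_of_stochastic (w : S → ℝ) (k : Fin n → S → A → S → ℝ)
    (hk : ∀ u s, ∑ a, ∑ s', k u s a s' = 1) :
    ∑ τ : Traj S A n, pathWeight w k τ = ∑ s, w s := by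
  induction n generalizing w with
  | zero => exact sum_pathWeight_zero w k
  | succ n ih =>
    rw [sum_pathWeight_succ, ih _ _ fun u => hk u.succ, sum_pushWeight]
    simp only [hk, mul_one]

lemma sum_pathWeight_eq_zero (w : S → ℝ) (k : Fin n → S → A → S → ℝ) (t : Fin n)
    (hkt : ∀ s, ∑ a, ∑ s', k t s a s' = 0)
    (hk : ∀ u, t < u → ∀ s, ∑ a, ∑ s', k u s a s' = 1) :
    ∑ τ : Traj S A n, pathWeight w k τ = 0 := by
  induction n generalizing w with
  | zero => exact t.elim0
  | succ n ih =>
    rw [sum_pathWeight_succ]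
    induction t using Fin.cases with
    | zero =>
      rw [sum_pathWeight_of_stochastic _ _ fun u => hk u.succ u.succ_pos, sum_pushWeight]
      simp only [hkt, mul_zero, sum_const_zero]
    | succ t =>
      exact ih _ _ t hkt fun u hu => hk u.succ (Fin.succ_lt_succ_iff.mpr hu)

lemma sum_pathWeight_mul_eq_zero (w : S → ℝ) (k : Fin n → S → A → S → ℝ) (t : Fin n)
    (hkt : ∀ s, ∑ a, ∑ s', k t s a s' = 0)
    (hk : ∀ u, t < u → ∀ s, ∑ a, ∑ s', k u s a s' = 1)
    (r : S → ℝ) (t' : Fin (n + 1)) (ht' : t' ≤ t.castSucc) :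
    ∑ τ : Traj S A n, pathWeight w k τ * r (τ.1 t') = 0 := by
  obtain ⟨u', rfl⟩ : ∃ u' : Fin n, u'.castSucc = t' :=
    ⟨t'.castLT (ht'.trans_lt t.castSucc_lt_last), Fin.castSucc_castLT _ _⟩
  set k' : Fin n → S → A → S → ℝ := fun u s a s' => (if u = u' then r s else 1) * k u s a s'
  have hk' : ∀ τ : Traj S A n,
      pathWeight w k τ * r (τ.1 u'.castSucc) = pathWeight w k' τ := fun τ => by
    simp only [pathWeight, k', prod_mul_distrib, prod_ite_eq', mem_univ, if_true]
    ring
  simp only [hk']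
  refine sum_pathWeight_eq_zero w k' t (fun s => ?_) fun u hu s => ?_
  · simp only [k', ← mul_sum, hkt, mul_zero]
  · have hu' : u ≠ u' := (Fin.castSucc_le_castSucc_iff.mp ht' |>.trans_lt hu).ne'
    simp only [k', if_neg hu', one_mul, hk u hu]

lemma sum_pathWeight_mul_sum_eq_sum_filter (w : S → ℝ) (k : Fin n → S → A → S → ℝ) (t : Fin n)
    (hkt : ∀ s, ∑ a, ∑ s', k t s a s' = 0)
    (hk : ∀ u, t < u → ∀ s, ∑ a, ∑ s', k u s a s' = 1) (r : S → ℝ) :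
    ∑ τ : Traj S A n, pathWeight w k τ * ∑ t', r (τ.1 t') =
      ∑ τ : Traj S A n, pathWeight w k τ *
        ∑ t' ∈ univ.filter (fun t' : Fin (n + 1) => t.castSucc < t'), r (τ.1 t') := by
  have hle : ∑ τ : Traj S A n, pathWeight w k τ *
      ∑ t' ∈ univ.filter (fun t' : Fin (n + 1) => ¬ t.castSucc < t'), r (τ.1 t') = 0 := by
    simp only [mul_sum]
    rw [sum_comm]
    exact sum_eq_zero fun t' ht' =>
      sum_pathWeight_mul_eq_zero w k t hkt hk r t' (not_lt.mp (mem_filter.mp ht').2)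
  simp only [← sum_filter_add_sum_filter_not univ (t.castSucc < ·), mul_add, sum_add_distrib,
    hle, add_zero]

lemma sum_derivKernel_self {p d : S → A → ℝ} {trans : S → A → S → ℝ}
    (hd : ∀ s, ∑ a, d s a = 0) (htrans : ∀ s a, ∑ s', trans s a s' = 1) (t : Fin n) (s : S) :
    ∑ a, ∑ s', derivKernel p d trans t t s a s' = 0 := by
  simp only [derivKernel, ↓reduceIte, ← mul_sum, htrans, mul_one, hd]

lemma sum_derivKernel_of_ne {p d : S → A → ℝ} {trans : S → A → S → ℝ}
    (hp : ∀ s, ∑ a, p s a = 1) (htrans : ∀ s a, ∑ s', trans s a s' = 1) {t u : Fin n}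
    (hu : u ≠ t) (s : S) :
    ∑ a, ∑ s', derivKernel p d trans t u s a s' = 1 := by
  simp only [derivKernel, if_neg hu, ← mul_sum, htrans, mul_one, hp]

lemma sum_sum_pathWeight_derivKernel_mul_sum {p d : S → A → ℝ} {trans : S → A → S → ℝ}
    (hp : ∀ s, ∑ a, p s a = 1) (hd : ∀ s, ∑ a, d s a = 0)
    (htrans : ∀ s a, ∑ s', trans s a s' = 1) (w : S → ℝ) (r : S → ℝ) :
    ∑ τ : Traj S A n, (∑ t, pathWeight w (derivKernel p d trans t) τ) * ∑ t', r (τ.1 t') =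
      ∑ τ : Traj S A n, ∑ t, pathWeight w (derivKernel p d trans t) τ *
        ∑ t' ∈ univ.filter (fun t' : Fin (n + 1) => t.castSucc < t'), r (τ.1 t') := by
  simp only [sum_mul]
  rw [sum_comm, sum_comm (s := univ (α := Traj S A n))]
  exact sum_congr rfl fun t _ => sum_pathWeight_mul_sum_eq_sum_filter w _ t
    (sum_derivKernel_self hd htrans t) (fun u hu => sum_derivKernel_of_ne hp htrans hu.ne') r

end Traj

lemma sum_deriv_eq_zero_of_sum_const {ι : Type*} [Fintype ι] {f : ι → ℝ → ℝ} {c x : ℝ}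
    (hf : ∀ i, DifferentiableAt ℝ (f i) x) (hsum : ∀ y, ∑ i, f i y = c) :
    ∑ i, deriv (f i) x = 0 := by
  rw [← deriv_fun_sum fun i _ => hf i]
  simp only [hsum, deriv_const]

open Traj in
theorem goal_conditional_policy_gradient_general {S A G : Type} [Fintype S] [Fintype A] [Fintype G]
    (n : ℕ) (init : S → ℝ) (trans : S → A → S → ℝ) (pol : ℝ → G → S → A → ℝ)
    (pG : G → ℝ) (r : S → G → ℝ)
    (htrans1 : ∀ s a, ∑ s' : S, trans s a s' = 1)
    (hpol : ∀ (θ' : ℝ) (g : G) (s : S) (a : A), 0 < pol θ' g s a)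
    (hpold : ∀ (g : G) (s : S) (a : A), Differentiable ℝ fun θ' => pol θ' g s a)
    (hpol1 : ∀ (θ' : ℝ) (g : G) (s : S), ∑ a : A, pol θ' g s a = 1)
    (θ : ℝ) :
    deriv (expReturn n init trans pol pG r) θ =
      ∑ g : G, pG g * ∑ τ : Traj S A n, trajProb n init trans pol θ g τ *
        ∑ t : Fin n,
          deriv (fun θ' => Real.log (pol θ' g (τ.1 t.castSucc) (τ.2 t))) θ *
            ∑ t' ∈ univ.filter (fun t' : Fin (n + 1) => t.castSucc < t'), r (τ.1 t') g := by
  let d : G → S → A → ℝ := fun g s a => deriv (fun θ' => pol θ' g s a) θ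
  have hd : ∀ g s a, HasDerivAt (fun θ' => pol θ' g s a) (d g s a) θ :=
    fun g s a => (hpold g s a θ).hasDerivAt
  have hlog : ∀ g s a, deriv (fun θ' => Real.log (pol θ' g s a)) θ = d g s a / pol θ g s a :=
    fun g s a => ((hd g s a).log (hpol θ g s a).ne').deriv
  have hη : HasDerivAt (expReturn n init trans pol pG r) (∑ g, pG g * ∑ τ : Traj S A n,
      (∑ t : Fin n, pathWeight init (derivKernel (pol θ g) (d g) trans t) τ) *
        ∑ t' : Fin (n + 1), r (τ.1 t') g) θ := by
    unfold expReturn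
    simp only [trajProb_eq_pathWeight]
    refine HasDerivAt.fun_sum fun g _ => (HasDerivAt.fun_sum fun τ _ => ?_).const_mul _
    exact (hasDerivAt_pathWeight (hd g) init trans τ).mul_const _
  rw [hη.deriv]
  refine sum_congr rfl fun g _ => congrArg _ ?_
  refine (sum_sum_pathWeight_derivKernel_mul_sum (hpol1 θ g)
    (fun s => sum_deriv_eq_zero_of_sum_const (fun a => hpold g s a θ) (hpol1 · g s))
    htrans1 init (r · g)).trans (sum_congr rfl fun τ _ => ?_)
  rw [mul_sum]
  refine sum_congr rfl fun t _ => ?_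
  rw [hlog, ← mul_assoc, trajProb_eq_pathWeight,
    pathWeight_mul_div_eq_derivKernel _ _ _ _ _ _ (hpol θ g _ _).ne']

/-- the goal-conditional policy gradient theorem.
`∇η(θ) = ∑_g p(g) ∑_τ p(τ∣g,θ) ∑_{t=1}^{T-1} ∇ log p(a_t∣s_t,g,θ) ∑_{t'=t+1}^T r(s_{t'}, g)`. -/
theorem goal_conditional_policy_gradient {S A G : Type} [Fintype S] [Fintype A] [Fintype G]
    (n : ℕ) (init : S → ℝ) (trans : S → A → S → ℝ) (pol : ℝ → G → S → A → ℝ)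
    (pG : G → ℝ) (r : S → G → ℝ)
    (hinit : ∀ s, 0 < init s) (hinit1 : ∑ s : S, init s = 1)
    (htrans : ∀ s a s', 0 < trans s a s') (htrans1 : ∀ s a, ∑ s' : S, trans s a s' = 1)
    (hpol : ∀ (θ' : ℝ) (g : G) (s : S) (a : A), 0 < pol θ' g s a)
    (hpold : ∀ (g : G) (s : S) (a : A), Differentiable ℝ fun θ' => pol θ' g s a)
    (hpol1 : ∀ (θ' : ℝ) (g : G) (s : S), ∑ a : A, pol θ' g s a = 1)
    (hpG : ∀ g, 0 ≤ pG g) (hpG1 : ∑ g : G, pG g = 1)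
    (θ : ℝ) :
    deriv (expReturn n init trans pol pG r) θ =
      ∑ g : G, pG g * ∑ τ : Traj S A n, trajProb n init trans pol θ g τ *
        ∑ t : Fin n,
          deriv (fun θ' => Real.log (pol θ' g (τ.1 t.castSucc) (τ.2 t))) θ *
            ∑ t' ∈ univ.filter (fun t' : Fin (n + 1) => t.castSucc < t'), r (τ.1 t') g :=
  goal_conditional_policy_gradient_general n init trans pol pG r htrans1 hpol hpold hpol1 θ
end

section
/- Every-decision hindsight policy gradient: for any fixed (original) goal g', the gradient ∇η(θ) equals Σ_τ p(τ | g', θ) Σ_g p(g) Σ_{t=1}^{T−1} ∇ log p(a_t | s_t, g, θ) Σ_{t'=t+1}^T [ ∏_{k=1}^{T−1} p(a_k | s_k, g, θ)/p(a_k | s_k, g', θ) ] r(s_{t'}, g). -/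
open Finset

/-!
Differentiating `p(τ ∣ g, θ)` by the product rule splits `∇η` into one term per decision `t`,
the path weight with the `t`-th policy factor replaced by its derivative. Since
`∑ₐ ∇p(a ∣ s, g, θ) = 0` and the transitions after `t` are stochastic, summing out the path
from the end kills every reward received at or before `s_t`. Finally, the goal only enters
`p(τ ∣ g, θ)` through the policy factors, so `p(τ ∣ g, θ) = p(τ ∣ g', θ) ∏ₖ π_g / π_{g'}`, and
`∇p / p = ∇ log p` turns the remaining sum into an expectation under the original goal `g'`.
-/

section PathWeight

variable {S A : Type}

theorem sum_traj_succ [Fintype S] [Fintype A] {M : Type} [AddCommMonoid M] {n : ℕ}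
    (F : Traj S A (n + 1) → M) :
    ∑ τ, F τ = ∑ τ : Traj S A n, ∑ c : A, ∑ s : S, F (Fin.snoc τ.1 s, Fin.snoc τ.2 c) := by
  simp only [Fintype.sum_prod_type]
  rw [← (Fin.snocEquiv fun _ => S).sum_comp, Fintype.sum_prod_type, Finset.sum_comm]
  refine Finset.sum_congr rfl fun σ _ => ?_
  rw [Finset.sum_comm, ← (Fin.snocEquiv fun _ => A).sum_comp, Fintype.sum_prod_type,
    Finset.sum_comm]
  rfl

def pathWeight {n : ℕ} (init : S → ℝ) (K : Fin n → S → A → S → ℝ) (τ : Traj S A n) : ℝ :=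
  init (τ.1 0) * ∏ k, K k (τ.1 k.castSucc) (τ.2 k) (τ.1 k.succ)

def kernelMass [Fintype S] [Fintype A] (κ : S → A → S → ℝ) (s : S) : ℝ :=
  ∑ a, ∑ s', κ s a s'

theorem pathWeight_snoc {n : ℕ} (init : S → ℝ) (K : Fin (n + 1) → S → A → S → ℝ)
    (τ : Traj S A n) (c : A) (s : S) :
    pathWeight init K (Fin.snoc τ.1 s, Fin.snoc τ.2 c) =
      pathWeight init (fun k => K k.castSucc) τ * K (Fin.last n) (τ.1 (Fin.last n)) c s := by
  simp only [pathWeight, Fin.prod_univ_castSucc, Fin.snoc_castSucc, Fin.succ_castSucc,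
    Fin.snoc_last, Fin.succ_last]
  rw [← Fin.castSucc_zero, Fin.snoc_castSucc, mul_assoc]

theorem sum_pathWeight_mul_comp_init [Fintype S] [Fintype A] {n : ℕ} (init : S → ℝ)
    (K : Fin (n + 1) → S → A → S → ℝ) (φ : (Fin (n + 1) → S) → ℝ) :
    ∑ τ : Traj S A (n + 1), pathWeight init K τ * φ (Fin.init τ.1) =
      ∑ τ : Traj S A n, pathWeight init (fun k => K k.castSucc) τ * φ τ.1 *
        kernelMass (K (Fin.last n)) (τ.1 (Fin.last n)) := by
  rw [sum_traj_succ]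
  refine Finset.sum_congr rfl fun τ _ => ?_
  simp only [pathWeight_snoc, Fin.init_snoc, kernelMass, Finset.mul_sum]
  exact Finset.sum_congr rfl fun c _ => Finset.sum_congr rfl fun s _ => by ring

/-- Summing out the path from the end, the stochastic kernels after `j` contribute a factor `1`
and the kernel at `j` a factor `0`. -/
theorem sum_pathWeight_mul_eq_zero [Fintype S] [Fintype A] (init : S → ℝ) {n : ℕ}
    (K : Fin n → S → A → S → ℝ) (j : Fin n) (hj : ∀ s, kernelMass (K j) s = 0)
    (hK : ∀ k, j < k → ∀ s, kernelMass (K k) s = 1) (φ : (Fin (n + 1) → S) → ℝ)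
    (hφ : ∀ σ σ' : Fin (n + 1) → S, (∀ i ≤ j.castSucc, σ i = σ' i) → φ σ = φ σ') :
    ∑ τ : Traj S A n, pathWeight init K τ * φ τ.1 = 0 := by
  induction n with
  | zero => exact j.elim0
  | succ m ih =>
    set Φ : (Fin (m + 1) → S) → ℝ := fun σ => φ (Fin.snoc σ (σ 0))
    have hφΦ : ∀ σ, φ σ = Φ (Fin.init σ) := fun σ => hφ _ _ fun i hi => by
      obtain ⟨i, rfl⟩ | rfl := i.eq_castSucc_or_eq_last
      · simp only [Fin.snoc_castSucc, Fin.init]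
      · exact absurd hi (not_le.mpr (Fin.castSucc_lt_last _))
    simp only [hφΦ]
    rw [sum_pathWeight_mul_comp_init]
    obtain ⟨j, rfl⟩ | rfl := j.eq_castSucc_or_eq_last
    · simp only [hK _ (Fin.castSucc_lt_last j), mul_one]
      refine ih _ j hj (fun k hk => hK _ (Fin.castSucc_lt_castSucc_iff.mpr hk)) Φ
        fun σ σ' hσ => hφ _ _ fun i hi => ?_
      obtain ⟨i, rfl⟩ | rfl := i.eq_castSucc_or_eq_last
      · simpa only [Fin.snoc_castSucc] using hσ i (Fin.castSucc_le_castSucc_iff.mp hi)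
      · exact absurd hi (not_le.mpr (Fin.castSucc_lt_last _))
    · simp only [hj, mul_zero, Finset.sum_const_zero]

theorem pathWeight_update {n : ℕ} (init : S → ℝ) (K : Fin n → S → A → S → ℝ) (t : Fin n)
    (κ : S → A → S → ℝ) (τ : Traj S A n) :
    pathWeight init (Function.update K t κ) τ =
      init (τ.1 0) * (κ (τ.1 t.castSucc) (τ.2 t) (τ.1 t.succ) *
        ∏ k ∈ univ.erase t, K k (τ.1 k.castSucc) (τ.2 k) (τ.1 k.succ)) := by
  rw [pathWeight, ← Finset.mul_prod_erase _ _ (mem_univ t), Function.update_self]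
  congr 2
  exact Finset.prod_congr rfl fun k hk => by rw [Function.update_of_ne (ne_of_mem_erase hk)]

theorem hasDerivAt_pathWeight {n : ℕ} (init : S → ℝ) (K : ℝ → Fin n → S → A → S → ℝ)
    (K' : Fin n → S → A → S → ℝ) (x : ℝ)
    (hK : ∀ k s a s', HasDerivAt (fun x => K x k s a s') (K' k s a s') x) (τ : Traj S A n) :
    HasDerivAt (fun x => pathWeight init (K x) τ)
      (∑ k, pathWeight init (Function.update (K x) k (K' k)) τ) x := by
  have h := (HasDerivAt.fun_finsetProd fun k (_ : k ∈ univ) =>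
    hK k (τ.1 k.castSucc) (τ.2 k) (τ.1 k.succ)).const_mul (init (τ.1 0))
  refine h.congr_deriv ?_
  simp only [pathWeight_update, Finset.mul_sum, smul_eq_mul, mul_comm]

end PathWeight

section HindsightGradient

variable {S A G : Type} {n : ℕ} (init : S → ℝ) (trans : S → A → S → ℝ)
  (pol : ℝ → G → S → A → ℝ)

def policyKernel (θ : ℝ) (g : G) : S → A → S → ℝ :=
  fun s a s' => pol θ g s a * trans s a s'

/-- The part of `∂θ p(τ ∣ g, θ)` coming from the decision at time `t`. -/
noncomputable def trajProbPartial (θ : ℝ) (g : G) (t : Fin n) (τ : Traj S A n) : ℝ :=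
  pathWeight init (Function.update (fun _ => policyKernel trans pol θ g) t
    fun s a s' => deriv (fun θ' => pol θ' g s a) θ * trans s a s') τ

theorem trajProb_eq_pathWeight (θ : ℝ) (g : G) (τ : Traj S A n) :
    trajProb n init trans pol θ g τ = pathWeight init (fun _ => policyKernel trans pol θ g) τ :=
  rfl

theorem kernelMass_mul_of_sum_eq_one [Fintype S] [Fintype A] (w : S → A → ℝ)
    (htrans1 : ∀ s a, ∑ s' : S, trans s a s' = 1) (s : S) :
    kernelMass (fun s a s' => w s a * trans s a s') s = ∑ a, w s a := by
  simp only [kernelMass, ← Finset.mul_sum, htrans1, mul_one]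

theorem hasDerivAt_trajProb (θ : ℝ) (g : G)
    (hpold : ∀ s a, DifferentiableAt ℝ (fun θ' => pol θ' g s a) θ) (τ : Traj S A n) :
    HasDerivAt (fun θ' => trajProb n init trans pol θ' g τ)
      (∑ t, trajProbPartial init trans pol θ g t τ) θ :=
  hasDerivAt_pathWeight init _ _ θ
    (fun _ s a s' => (hpold s a).hasDerivAt.mul_const (trans s a s')) τ

theorem trajProb_mul_div_eq_trajProbPartial (θ : ℝ) (g : G) (t : Fin n) (τ : Traj S A n)
    (hne : pol θ g (τ.1 t.castSucc) (τ.2 t) ≠ 0) :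
    trajProb n init trans pol θ g τ *
        (deriv (fun θ' => pol θ' g (τ.1 t.castSucc) (τ.2 t)) θ /
          pol θ g (τ.1 t.castSucc) (τ.2 t)) =
      trajProbPartial init trans pol θ g t τ := by
  rw [trajProbPartial, pathWeight_update, trajProb_eq_pathWeight, pathWeight,
    ← Finset.mul_prod_erase _ _ (mem_univ t)]
  simp only [policyKernel]
  field_simp

theorem trajProb_mul_prod_div (θ : ℝ) (g g' : G) (hpol : ∀ s a, pol θ g' s a ≠ 0)
    (τ : Traj S A n) :
    trajProb n init trans pol θ g' τ *
        ∏ k, pol θ g (τ.1 k.castSucc) (τ.2 k) / pol θ g' (τ.1 k.castSucc) (τ.2 k) =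
      trajProb n init trans pol θ g τ := by
  rw [trajProb, trajProb, mul_assoc, ← Finset.prod_mul_distrib]
  congr 1
  refine Finset.prod_congr rfl fun k _ => ?_
  have hne := hpol (τ.1 k.castSucc) (τ.2 k)
  field_simp

/-- Importance sampling from the goal `g'`: the transition factors of `p(τ ∣ g, θ)` and
`p(τ ∣ g', θ)` agree, so only the policy ratios remain. -/
theorem trajProbPartial_eq_importance_weighted
    (θ : ℝ) (g g' : G) (hpol : ∀ s a, pol θ g s a ≠ 0) (hpol' : ∀ s a, pol θ g' s a ≠ 0)
    (hpold : ∀ s a, DifferentiableAt ℝ (fun θ' => pol θ' g s a) θ) (t : Fin n)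
    (τ : Traj S A n) :
    trajProbPartial init trans pol θ g t τ =
      trajProb n init trans pol θ g' τ *
        (∏ k, pol θ g (τ.1 k.castSucc) (τ.2 k) / pol θ g' (τ.1 k.castSucc) (τ.2 k)) *
          deriv (fun θ' => Real.log (pol θ' g (τ.1 t.castSucc) (τ.2 t))) θ := by
  rw [trajProb_mul_prod_div init trans pol θ g g' hpol',
    ((hpold _ _).hasDerivAt.log (hpol _ _)).deriv,
    trajProb_mul_div_eq_trajProbPartial init trans pol θ g t τ (hpol _ _)]

theorem sum_trajProbPartial_mul_eq_zero [Fintype S] [Fintype A] (θ : ℝ) (g : G)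
    (htrans1 : ∀ s a, ∑ s' : S, trans s a s' = 1)
    (hpold : ∀ s a, DifferentiableAt ℝ (fun θ' => pol θ' g s a) θ)
    (hpol1 : ∀ θ' s, ∑ a, pol θ' g s a = 1) (t : Fin n) (φ : (Fin (n + 1) → S) → ℝ)
    (hφ : ∀ σ σ' : Fin (n + 1) → S, (∀ i ≤ t.castSucc, σ i = σ' i) → φ σ = φ σ') :
    ∑ τ, trajProbPartial init trans pol θ g t τ * φ τ.1 = 0 := by
  have hderiv : ∀ s, ∑ a, deriv (fun θ' => pol θ' g s a) θ = 0 := fun s => by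
    rw [← deriv_fun_sum fun a _ => hpold s a]
    simp only [hpol1, deriv_const]
  refine sum_pathWeight_mul_eq_zero init _ t (fun s => ?_) (fun k hk s => ?_) φ hφ
  · rw [Function.update_self, kernelMass_mul_of_sum_eq_one _ _ htrans1, hderiv]
  · rw [Function.update_of_ne hk.ne']
    exact (kernelMass_mul_of_sum_eq_one trans (pol θ g) htrans1 s).trans (hpol1 θ s)

theorem sum_trajProbPartial_mul_sum_reward [Fintype S] [Fintype A] (θ : ℝ) (g : G)
    (htrans1 : ∀ s a, ∑ s' : S, trans s a s' = 1)
    (hpold : ∀ s a, DifferentiableAt ℝ (fun θ' => pol θ' g s a) θ)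
    (hpol1 : ∀ θ' s, ∑ a, pol θ' g s a = 1) (r : S → G → ℝ) (t : Fin n) :
    ∑ τ, trajProbPartial init trans pol θ g t τ * ∑ t', r (τ.1 t') g =
      ∑ τ, trajProbPartial init trans pol θ g t τ *
        ∑ t' ∈ univ.filter (t.castSucc < ·), r (τ.1 t') g := by
  have hpast := sum_trajProbPartial_mul_eq_zero init trans pol θ g htrans1 hpold hpol1 t
    (fun σ => ∑ t' ∈ univ.filter (¬ t.castSucc < ·), r (σ t') g)
    fun σ σ' hσ => Finset.sum_congr rfl fun t' ht' => by
      rw [hσ t' (not_lt.mp (mem_filter.mp ht').2)]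
  rw [← sub_eq_zero, ← Finset.sum_sub_distrib, ← hpast]
  refine Finset.sum_congr rfl fun τ _ => ?_
  rw [← mul_sub, ← sum_filter_add_sum_filter_not univ (t.castSucc < ·), add_sub_cancel_left]

theorem hasDerivAt_expReturn [Fintype S] [Fintype A] [Fintype G] (pG : G → ℝ) (r : S → G → ℝ)
    (θ : ℝ) (hpold : ∀ g s a, DifferentiableAt ℝ (fun θ' => pol θ' g s a) θ) :
    HasDerivAt (expReturn n init trans pol pG r)
      (∑ g, pG g * ∑ τ : Traj S A n, (∑ t, trajProbPartial init trans pol θ g t τ) *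
        ∑ t', r (τ.1 t') g) θ :=
  HasDerivAt.fun_sum fun g _ => (HasDerivAt.fun_sum fun τ _ =>
    (hasDerivAt_trajProb init trans pol θ g (hpold g) τ).mul_const _).const_mul _

end HindsightGradient

theorem every_decision_hindsight_policy_gradient_general {S A G : Type}
    [Fintype S] [Fintype A] [Fintype G]
    (n : ℕ) (init : S → ℝ) (trans : S → A → S → ℝ) (pol : ℝ → G → S → A → ℝ)
    (pG : G → ℝ) (r : S → G → ℝ)
    (htrans1 : ∀ s a, ∑ s' : S, trans s a s' = 1)
    (hpol : ∀ (θ' : ℝ) (g : G) (s : S) (a : A), 0 < pol θ' g s a)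
    (hpold : ∀ (g : G) (s : S) (a : A), Differentiable ℝ fun θ' => pol θ' g s a)
    (hpol1 : ∀ (θ' : ℝ) (g : G) (s : S), ∑ a : A, pol θ' g s a = 1)
    (θ : ℝ) (g' : G) :
    deriv (expReturn n init trans pol pG r) θ =
      ∑ τ : Traj S A n, trajProb n init trans pol θ g' τ *
        ∑ g : G, pG g * ∑ t : Fin n,
          deriv (fun θ'' => Real.log (pol θ'' g (τ.1 t.castSucc) (τ.2 t))) θ *
            ∑ t' ∈ univ.filter (fun t' : Fin (n + 1) => t.castSucc < t'),
              (∏ k : Fin n,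
                  pol θ g (τ.1 k.castSucc) (τ.2 k) / pol θ g' (τ.1 k.castSucc) (τ.2 k)) *
                r (τ.1 t') g := by
  rw [(hasDerivAt_expReturn init trans pol pG r θ fun g s a => hpold g s a θ).deriv]
  calc _ = ∑ g, pG g * ∑ τ : Traj S A n, ∑ t, trajProbPartial init trans pol θ g t τ *
          ∑ t' ∈ univ.filter (fun t' : Fin (n + 1) => t.castSucc < t'), r (τ.1 t') g := by
        refine Finset.sum_congr rfl fun g _ => ?_
        simp only [Finset.sum_mul]
        rw [Finset.sum_comm, eq_comm, Finset.sum_comm]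
        exact congrArg _ (Finset.sum_congr rfl fun t _ =>
          (sum_trajProbPartial_mul_sum_reward init trans pol θ g htrans1
            (fun s a => hpold g s a θ) (fun θ' => hpol1 θ' g) r t).symm)
    _ = _ := by
        simp only [trajProbPartial_eq_importance_weighted init trans pol θ _ g'
          (fun s a => (hpol θ _ s a).ne') (fun s a => (hpol θ g' s a).ne')
          (fun s a => hpold _ s a θ), Finset.mul_sum]
        rw [Finset.sum_comm]
        simp only [mul_comm, mul_left_comm]

/-- the every-decision hindsight policy gradient. For any fixed original
goal `g'`, `∇η(θ) = ∑_τ p(τ∣g',θ) ∑_g p(g) ∑_{t=1}^{T-1} ∇ log p(a_t∣s_t,g,θ)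
∑_{t'=t+1}^T [∏_{k=1}^{T-1} p(a_k∣s_k,g,θ)/p(a_k∣s_k,g',θ)] r(s_{t'}, g)`. -/
theorem every_decision_hindsight_policy_gradient {S A G : Type}
    [Fintype S] [Fintype A] [Fintype G]
    (n : ℕ) (init : S → ℝ) (trans : S → A → S → ℝ) (pol : ℝ → G → S → A → ℝ)
    (pG : G → ℝ) (r : S → G → ℝ)
    (hinit : ∀ s, 0 < init s) (hinit1 : ∑ s : S, init s = 1)
    (htrans : ∀ s a s', 0 < trans s a s') (htrans1 : ∀ s a, ∑ s' : S, trans s a s' = 1)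
    (hpol : ∀ (θ' : ℝ) (g : G) (s : S) (a : A), 0 < pol θ' g s a)
    (hpold : ∀ (g : G) (s : S) (a : A), Differentiable ℝ fun θ' => pol θ' g s a)
    (hpol1 : ∀ (θ' : ℝ) (g : G) (s : S), ∑ a : A, pol θ' g s a = 1)
    (hpG : ∀ g, 0 ≤ pG g) (hpG1 : ∑ g : G, pG g = 1)
    (θ : ℝ) (g' : G) :
    deriv (expReturn n init trans pol pG r) θ =
      ∑ τ : Traj S A n, trajProb n init trans pol θ g' τ *
        ∑ g : G, pG g * ∑ t : Fin n,
          deriv (fun θ'' => Real.log (pol θ'' g (τ.1 t.castSucc) (τ.2 t))) θ *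
            ∑ t' ∈ univ.filter (fun t' : Fin (n + 1) => t.castSucc < t'),
              (∏ k : Fin n,
                  pol θ g (τ.1 k.castSucc) (τ.2 k) / pol θ g' (τ.1 k.castSucc) (τ.2 k)) *
                r (τ.1 t') g :=
  every_decision_hindsight_policy_gradient_general n init trans pol pG r htrans1 hpol hpold hpol1 θ
    g'
end

section
/- Hindsight baseline lemma: for every fixed goal g', time step t, parameters θ, and real-valued baseline function b_t^θ of state and goal, Σ_τ p(τ | g', θ) Σ_g p(g) ∇ log p(a_t | s_t, g, θ) · [ ∏_{k=1}^t p(a_k | s_k, g, θ)/p(a_k | s_k, g', θ) ] · b_t^θ(s_t, g) = 0. -/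
open Finset

lemma markov_zero {S A : Type} [Fintype S] [Fintype A]
    (trans : S → A → S → ℝ) (htrans1 : ∀ s a, ∑ s' : S, trans s a s' = 1) :
    ∀ (n : ℕ) (init : S → ℝ) (f : Fin n → S → A → ℝ) (t : Fin n),
      (∀ s, ∑ a : A, f t s a = 0) →
      (∀ k, t < k → ∀ s, ∑ a : A, f k s a = 1) →
      ∑ τ : Traj S A n, init (τ.1 0) * ∏ k : Fin n,
          f k (τ.1 k.castSucc) (τ.2 k) * trans (τ.1 k.castSucc) (τ.2 k) (τ.1 k.succ) = 0 := by
  intro n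
  induction n with
  | zero => intro init f t _ _; exact absurd t.2 (by simp)
  | succ m ih =>
    intro init f t h0 h1
    have esum : ∀ (F : Traj S A (m+1) → ℝ),
        ∑ τ' : Traj S A (m+1), F τ' =
        ∑ τ : Traj S A m, ∑ an : A, ∑ sn : S, F (Fin.snoc τ.1 sn, Fin.snoc τ.2 an) := by
      intro F
      rw [← Fintype.sum_equiv (⟨fun p => (Fin.snoc p.1.1 p.2.2, Fin.snoc p.1.2 p.2.1),
            fun τ' => ((Fin.init τ'.1, Fin.init τ'.2), τ'.2 (Fin.last m), τ'.1 (Fin.last (m+1))),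
            fun p => by simp [Fin.init_snoc], fun τ' => by simp [Fin.snoc_init_self]⟩ :
            (Traj S A m × A × S) ≃ Traj S A (m+1))
          (fun p => F (Fin.snoc p.1.1 p.2.2, Fin.snoc p.1.2 p.2.1)) F (fun p => rfl)]
      rw [Fintype.sum_prod_type]
      exact Finset.sum_congr rfl fun τ _ => by rw [Fintype.sum_prod_type]
    rw [esum]
    have step : ∀ τ : Traj S A m, ∀ an : A, ∀ sn : S,
        init ((Fin.snoc τ.1 sn : Fin (m+2) → S) 0) *
          ∏ k : Fin (m+1),
            f k ((Fin.snoc τ.1 sn : Fin (m+2) → S) k.castSucc) ((Fin.snoc τ.2 an : Fin (m+1) → A) k) *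
              trans ((Fin.snoc τ.1 sn : Fin (m+2) → S) k.castSucc) ((Fin.snoc τ.2 an : Fin (m+1) → A) k) ((Fin.snoc τ.1 sn : Fin (m+2) → S) k.succ)
        = init (τ.1 0) *
            ((∏ j : Fin m, f j.castSucc (τ.1 j.castSucc) (τ.2 j) *
                trans (τ.1 j.castSucc) (τ.2 j) (τ.1 j.succ)) *
              (f (Fin.last m) (τ.1 (Fin.last m)) an * trans (τ.1 (Fin.last m)) an sn)) := by
      intro τ an sn
      rw [Fin.prod_univ_castSucc]
      have h00 : (Fin.snoc τ.1 sn : Fin (m+2) → S) 0 = τ.1 0 := by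
        rw [show (0 : Fin (m+2)) = (0 : Fin (m+1)).castSucc by simp, Fin.snoc_castSucc]
      rw [h00]
      congr 1
      congr 1
      · refine Finset.prod_congr rfl fun j _ => ?_
        rw [Fin.snoc_castSucc, Fin.snoc_castSucc, Fin.succ_castSucc, Fin.snoc_castSucc]
      · rw [Fin.snoc_castSucc, Fin.snoc_last, Fin.succ_last, Fin.snoc_last]
    calc ∑ τ : Traj S A m, ∑ an : A, ∑ sn : S,
          init ((Fin.snoc τ.1 sn : Fin (m+2) → S) 0) *
            ∏ k : Fin (m+1),
              f k ((Fin.snoc τ.1 sn : Fin (m+2) → S) k.castSucc) ((Fin.snoc τ.2 an : Fin (m+1) → A) k) *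
                trans ((Fin.snoc τ.1 sn : Fin (m+2) → S) k.castSucc) ((Fin.snoc τ.2 an : Fin (m+1) → A) k) ((Fin.snoc τ.1 sn : Fin (m+2) → S) k.succ)
        = ∑ τ : Traj S A m,
            (init (τ.1 0) * ∏ j : Fin m, f j.castSucc (τ.1 j.castSucc) (τ.2 j) *
                trans (τ.1 j.castSucc) (τ.2 j) (τ.1 j.succ)) *
              ∑ an : A, f (Fin.last m) (τ.1 (Fin.last m)) an := by
          refine Finset.sum_congr rfl fun τ _ => ?_
          rw [Finset.mul_sum]
          refine Finset.sum_congr rfl fun an _ => ?_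
          have : ∀ sn : S, init ((Fin.snoc τ.1 sn : Fin (m+2) → S) 0) *
              ∏ k : Fin (m+1),
                f k ((Fin.snoc τ.1 sn : Fin (m+2) → S) k.castSucc) ((Fin.snoc τ.2 an : Fin (m+1) → A) k) *
                  trans ((Fin.snoc τ.1 sn : Fin (m+2) → S) k.castSucc) ((Fin.snoc τ.2 an : Fin (m+1) → A) k) ((Fin.snoc τ.1 sn : Fin (m+2) → S) k.succ)
              = (init (τ.1 0) * ((∏ j : Fin m, f j.castSucc (τ.1 j.castSucc) (τ.2 j) *
                  trans (τ.1 j.castSucc) (τ.2 j) (τ.1 j.succ)) * f (Fin.last m) (τ.1 (Fin.last m)) an)) *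
                  trans (τ.1 (Fin.last m)) an sn := by
            intro sn; rw [step τ an sn]; ring
          rw [Finset.sum_congr rfl fun sn _ => this sn, ← Finset.mul_sum, htrans1, mul_one]
          ring
      _ = 0 := by
          by_cases ht : t = Fin.last m
          · simp only [← ht, h0, mul_zero]
            exact Finset.sum_const_zero
          · obtain ⟨t', ht'⟩ := Fin.exists_castSucc_eq.2 ht
            have hlt : t < Fin.last m := lt_of_le_of_ne (Fin.le_last t) ht
            simp only [h1 (Fin.last m) hlt, mul_one]
            exact ih init (fun j => f j.castSucc) t'
              (fun s => by simp only [ht']; exact h0 s)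
              (fun k hk s => h1 k.castSucc (by rw [← ht']; exact Fin.castSucc_lt_castSucc_iff.2 hk) s)

/-- the hindsight baseline lemma. For every fixed goal `g'`, time step `t`,
parameters `θ`, and baseline `b_t^θ`,
`∑_τ p(τ∣g',θ) ∑_g p(g) ∇ log p(a_t∣s_t,g,θ)
  [∏_{k=1}^{t} p(a_k∣s_k,g,θ)/p(a_k∣s_k,g',θ)] b_t^θ(s_t, g) = 0`. -/
theorem hindsight_baseline_vanishes {S A G : Type}
    [Fintype S] [Fintype A] [Fintype G]
    (n : ℕ) (init : S → ℝ) (trans : S → A → S → ℝ) (pol : ℝ → G → S → A → ℝ)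
    (pG : G → ℝ)
    (hinit : ∀ s, 0 < init s) (hinit1 : ∑ s : S, init s = 1)
    (htrans : ∀ s a s', 0 < trans s a s') (htrans1 : ∀ s a, ∑ s' : S, trans s a s' = 1)
    (hpol : ∀ (θ' : ℝ) (g : G) (s : S) (a : A), 0 < pol θ' g s a)
    (hpold : ∀ (g : G) (s : S) (a : A), Differentiable ℝ fun θ' => pol θ' g s a)
    (hpol1 : ∀ (θ' : ℝ) (g : G) (s : S), ∑ a : A, pol θ' g s a = 1)
    (hpG : ∀ g, 0 ≤ pG g) (hpG1 : ∑ g : G, pG g = 1)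
    (θ : ℝ) (g' : G) (t : Fin n) (b : S → G → ℝ) :
    ∑ τ : Traj S A n, trajProb n init trans pol θ g' τ *
        ∑ g : G, pG g *
          (deriv (fun θ'' => Real.log (pol θ'' g (τ.1 t.castSucc) (τ.2 t))) θ *
            ((∏ k : Fin n,
                if k ≤ t then
                  pol θ g (τ.1 k.castSucc) (τ.2 k) / pol θ g' (τ.1 k.castSucc) (τ.2 k)
                else 1) *
              b (τ.1 t.castSucc) g)) = 0 := by
  have hlog : ∀ (g : G) (s : S) (a : A),
      deriv (fun θ'' => Real.log (pol θ'' g s a)) θ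
        = deriv (fun θ'' => pol θ'' g s a) θ / pol θ g s a := fun g s a =>
    (((hpold g s a) θ).hasDerivAt.log (ne_of_gt (hpol θ g s a))).deriv
  have hds : ∀ (g : G) (s : S), ∑ a : A, deriv (fun θ'' => pol θ'' g s a) θ = 0 := by
    intro g s
    rw [← deriv_fun_sum (fun a _ => (hpold g s a) θ)]
    have h1 : (fun θ'' => ∑ a : A, pol θ'' g s a) = fun _ => (1:ℝ) :=
      funext fun θ'' => hpol1 θ'' g s
    rw [h1, deriv_const]
  simp only [Finset.mul_sum]
  rw [Finset.sum_comm]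
  refine Finset.sum_eq_zero fun g _ => ?_
  set f : Fin n → S → A → ℝ := fun k s a =>
    if k < t then pol θ g s a
    else if k = t then pG g * (deriv (fun θ'' => pol θ'' g s a) θ * b s g)
    else pol θ g' s a with hf
  have key : ∀ τ : Traj S A n,
      trajProb n init trans pol θ g' τ *
        (pG g * (deriv (fun θ'' => Real.log (pol θ'' g (τ.1 t.castSucc) (τ.2 t))) θ *
          ((∏ k : Fin n,
              if k ≤ t then
                pol θ g (τ.1 k.castSucc) (τ.2 k) / pol θ g' (τ.1 k.castSucc) (τ.2 k)
              else 1) *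
            b (τ.1 t.castSucc) g)))
      = init (τ.1 0) * ∏ k : Fin n,
          f k (τ.1 k.castSucc) (τ.2 k) * trans (τ.1 k.castSucc) (τ.2 k) (τ.1 k.succ) := by
    intro τ
    rw [trajProb, hlog]
    rw [← Finset.mul_prod_erase Finset.univ
        (fun k : Fin n => pol θ g' (τ.1 k.castSucc) (τ.2 k) *
          trans (τ.1 k.castSucc) (τ.2 k) (τ.1 k.succ)) (Finset.mem_univ t),
      ← Finset.mul_prod_erase Finset.univ
        (fun k : Fin n => if k ≤ t then
            pol θ g (τ.1 k.castSucc) (τ.2 k) / pol θ g' (τ.1 k.castSucc) (τ.2 k)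
          else 1) (Finset.mem_univ t),
      ← Finset.mul_prod_erase Finset.univ
        (fun k : Fin n => f k (τ.1 k.castSucc) (τ.2 k) *
          trans (τ.1 k.castSucc) (τ.2 k) (τ.1 k.succ)) (Finset.mem_univ t)]
    have e2 : (∏ k ∈ Finset.univ.erase t, pol θ g' (τ.1 k.castSucc) (τ.2 k) *
          trans (τ.1 k.castSucc) (τ.2 k) (τ.1 k.succ)) *
        ∏ k ∈ Finset.univ.erase t, (if k ≤ t then
            pol θ g (τ.1 k.castSucc) (τ.2 k) / pol θ g' (τ.1 k.castSucc) (τ.2 k)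
          else 1)
        = ∏ k ∈ Finset.univ.erase t, f k (τ.1 k.castSucc) (τ.2 k) *
            trans (τ.1 k.castSucc) (τ.2 k) (τ.1 k.succ) := by
      rw [← Finset.prod_mul_distrib]
      refine Finset.prod_congr rfl fun k hk => ?_
      have hkt : k ≠ t := Finset.ne_of_mem_erase hk
      rcases lt_or_gt_of_ne hkt with hlt | hgt
      · rw [if_pos (le_of_lt hlt), hf]
        simp only [if_pos hlt]
        have := ne_of_gt (hpol θ g' (τ.1 k.castSucc) (τ.2 k))
        field_simp
      · rw [if_neg (not_le.2 hgt), hf]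
        simp only [if_neg (not_lt.2 hgt.le), if_neg hkt]
        ring
    rw [← e2]
    have hft : f t (τ.1 t.castSucc) (τ.2 t) =
        pG g * (deriv (fun θ'' => pol θ'' g (τ.1 t.castSucc) (τ.2 t)) θ * b (τ.1 t.castSucc) g) := by
      rw [hf]; simp
    rw [hft, if_pos (le_refl t)]
    have hpg' := ne_of_gt (hpol θ g' (τ.1 t.castSucc) (τ.2 t))
    have hpg := ne_of_gt (hpol θ g (τ.1 t.castSucc) (τ.2 t))
    field_simp
  rw [Finset.sum_congr rfl fun τ _ => key τ]
  refine markov_zero trans htrans1 n init f t ?_ ?_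
  · intro s
    have : ∀ a : A, f t s a = pG g * b s g * deriv (fun θ'' => pol θ'' g s a) θ := by
      intro a; rw [hf]; simp; ring
    rw [Finset.sum_congr rfl fun a _ => this a, ← Finset.mul_sum, hds, mul_zero]
  · intro k hk s
    have : ∀ a : A, f k s a = pol θ g' s a := by
      intro a; rw [hf]; simp [not_lt.2 (le_of_lt hk), ne_of_gt hk]
    rw [Finset.sum_congr rfl fun a _ => this a, hpol1]
end

section
/- Consistency of the weighted per-decision hindsight estimator: the estimator in which, for each alternative goal g and each pair of time steps (t, t'), the importance weight ∏_{k=1}^{t'−1} p(a_k^(i)|s_k^(i),g,θ)/p(a_k^(i)|s_k^(i),g^(i),θ) is normalized by the sum of the corresponding weights over all N trajectories, converges almost surely to ∇η(θ) as N → ∞. -/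
open Finset

open MeasureTheory ProbabilityTheory Filter

/-!
Under goal `g'`, the per-decision weight `∏_{k<t'} π(a_k|s_k,g)/π(a_k|s_k,g')` swaps the policy of
the first `t'` decisions from `g'` to `g`; because every later transition kernel is stochastic,
the expectation of the weight times any function of the first `t'` steps equals the expectation
of that function under `g`. Hence each weight has mean one and each weighted numerator has mean
`E[∇ log π(A_t|S_t,g) r(S_t',g) | g]`. The strong law of large numbers, applied to the finitely
many numerators and denominators, makes every ratio converge almost surely to that mean. Finally
`∇η` is the sum of these terms over `t < t'`: tilting the policy at step `t` by `1 + score` keeps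
it stochastic, so the score at step `t` is uncorrelated with the trajectory up to `t`.
-/

namespace Hindsight

theorem ae_tendsto_average_of_iIndepFun {Ω α : Type*} [MeasurableSpace Ω] {μ : Measure Ω}
    [IsFiniteMeasure μ] [Fintype α] [MeasurableSpace α] [DiscreteMeasurableSpace α]
    {X : ℕ → Ω → α} (hX : ∀ i, Measurable (X i)) (hindep : iIndepFun X μ) {p : α → ℝ}
    (hp : ∀ x, 0 ≤ p x) (hdist : ∀ i x, μ.map (X i) {x} = ENNReal.ofReal (p x)) (f : α → ℝ) :
    ∀ᵐ ω ∂μ, Tendsto (fun N : ℕ => (∑ i ∈ range N, f (X i ω)) / N) atTop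
      (nhds (∑ x, p x * f x)) := by
  have hf : Measurable f := .of_discrete
  have hident : ∀ i, IdentDistrib (X i) (X 0) μ μ := fun i =>
    ⟨(hX i).aemeasurable, (hX 0).aemeasurable,
      Measure.ext_of_singleton fun x => (hdist i x).trans (hdist 0 x).symm⟩
  have hint : Integrable (f ∘ X 0) μ :=
    (integrable_map_measure hf.aestronglyMeasurable (hX 0).aemeasurable).mp .of_finite
  have hmean : ∫ ω, f (X 0 ω) ∂μ = ∑ x, p x * f x := by
    rw [← integral_map (hX 0).aemeasurable hf.aestronglyMeasurable, integral_fintype .of_finite]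
    simp [Measure.real, hdist, hp]
  rw [← hmean]
  exact strong_law_ae_real (fun i => f ∘ X i) hint
    (fun i j hij => (hindep.comp (fun _ => f) fun _ => hf).indepFun hij)
    fun i => (hident i).comp hf

theorem tendsto_div_of_tendsto_div_natCast {u v : ℕ → ℝ} {a b : ℝ}
    (hu : Tendsto (fun N : ℕ => u N / N) atTop (nhds a))
    (hv : Tendsto (fun N : ℕ => v N / N) atTop (nhds b)) (hb : b ≠ 0) :
    Tendsto (fun N => u N / v N) atTop (nhds (a / b)) :=
  (hu.div hv hb).congr' <| (eventually_ne_atTop 0).mono fun _ hN =>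
    div_div_div_cancel_right₀ (Nat.cast_ne_zero.2 hN) _ _

theorem sum_sum_mul_sum_div {ι γ κ ν : Type*} (I : Finset ι) (Γ : Finset γ) (K : Finset κ)
    (L : κ → Finset ν) (c : γ → ℝ) (a : ι → γ → κ → ℝ) (b : ι → γ → ν → ℝ) (D : γ → ν → ℝ) :
    ∑ i ∈ I, ∑ g ∈ Γ, c g * ∑ t ∈ K, a i g t * ∑ t' ∈ L t, b i g t' / D g t'
      = ∑ g ∈ Γ, c g * ∑ t ∈ K, ∑ t' ∈ L t, (∑ i ∈ I, a i g t * b i g t') / D g t' := by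
  simp only [mul_sum, sum_div, mul_div_assoc]
  rw [sum_comm]
  refine sum_congr rfl fun g _ => ?_
  rw [sum_comm]
  refine sum_congr rfl fun t _ => ?_
  rw [sum_comm]

section TrajectoryWeights

variable {S A : Type} {N : ℕ}

/-- `trajProb n init trans pol θ g` is, definitionally, `trajWeight init` with the kernels
`fun _ s a s' => pol θ g s a * trans s a s'`. -/
def trajWeight (init : S → ℝ) (c : Fin N → S → A → S → ℝ) (τ : Traj S A N) : ℝ :=
  init (τ.1 0) * ∏ k : Fin N, c k (τ.1 k.castSucc) (τ.2 k) (τ.1 k.succ)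

def IsStochastic [Fintype S] [Fintype A] (c : S → A → S → ℝ) : Prop :=
  ∀ s, ∑ a, ∑ s', c s a s' = 1

def DependsOnPrefix (m : ℕ) (F : Traj S A N → ℝ) : Prop :=
  ∀ τ τ' : Traj S A N, (∀ j : Fin (N + 1), (j : ℕ) ≤ m → τ.1 j = τ'.1 j) →
    (∀ k : Fin N, (k : ℕ) < m → τ.2 k = τ'.2 k) → F τ = F τ'

def trajSnocEquiv (N : ℕ) : Traj S A N × (A × S) ≃ Traj S A (N + 1) where
  toFun p := (Fin.snoc p.1.1 p.2.2, Fin.snoc p.1.2 p.2.1)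
  invFun τ := ((Fin.init τ.1, Fin.init τ.2), (τ.2 (Fin.last N), τ.1 (Fin.last (N + 1))))
  left_inv p := by ext <;> simp
  right_inv τ := by ext <;> simp

theorem sum_traj_succ [Fintype S] [Fintype A] (f : Traj S A (N + 1) → ℝ) :
    ∑ τ, f τ = ∑ τ : Traj S A N, ∑ a : A, ∑ s : S, f (Fin.snoc τ.1 s, Fin.snoc τ.2 a) := by
  rw [← Fintype.sum_equiv (trajSnocEquiv N) _ f fun _ => rfl, Fintype.sum_prod_type]
  simp only [Fintype.sum_prod_type]
  rfl

theorem trajWeight_snoc (init : S → ℝ) (c : Fin (N + 1) → S → A → S → ℝ) (τ : Traj S A N)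
    (s : S) (a : A) :
    trajWeight init c (Fin.snoc τ.1 s, Fin.snoc τ.2 a)
      = trajWeight init (fun k => c k.castSucc) τ * c (Fin.last N) (τ.1 (Fin.last N)) a s := by
  simp only [trajWeight, Fin.prod_univ_castSucc, Fin.snoc_castSucc, Fin.succ_castSucc,
    Fin.snoc_last, Fin.succ_last, mul_assoc]
  rw [show (0 : Fin (N + 2)) = Fin.castSucc 0 from rfl, Fin.snoc_castSucc]

theorem sum_trajWeight_mul_succ [Fintype S] [Fintype A] (init : S → ℝ)
    {c : Fin (N + 1) → S → A → S → ℝ} (hc : IsStochastic (c (Fin.last N)))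
    {F : Traj S A (N + 1) → ℝ} {F' : Traj S A N → ℝ}
    (hF : ∀ τ s a, F (Fin.snoc τ.1 s, Fin.snoc τ.2 a) = F' τ) :
    ∑ τ, trajWeight init c τ * F τ = ∑ τ, trajWeight init (fun k => c k.castSucc) τ * F' τ := by
  rw [sum_traj_succ]
  refine sum_congr rfl fun τ _ => ?_
  simp only [trajWeight_snoc, hF, mul_assoc, ← mul_sum, ← sum_mul, hc _, one_mul]

theorem sum_trajWeight [Fintype S] [Fintype A] (init : S → ℝ) :
    ∀ {N : ℕ} {c : Fin N → S → A → S → ℝ}, (∀ k, IsStochastic (c k)) →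
      ∑ τ : Traj S A N, trajWeight init c τ = ∑ s, init s
  | 0, c, _ => by
    rw [Fintype.sum_prod_type, ← (Equiv.funUnique (Fin 1) S).sum_comp]
    simp [trajWeight]
  | N + 1, c, hc => by
    have h := sum_trajWeight_mul_succ init (hc (Fin.last N)) (F := 1) (F' := 1) fun _ _ _ => rfl
    simp only [Pi.one_apply, mul_one] at h
    rw [h, sum_trajWeight init fun k => hc k.castSucc]

theorem DependsOnPrefix.snoc_eq {m : ℕ} {F : Traj S A (N + 1) → ℝ} (hF : DependsOnPrefix m F)
    (hm : m ≤ N) {τ τ' : Traj S A N} (h₁ : ∀ j : Fin (N + 1), (j : ℕ) ≤ m → τ.1 j = τ'.1 j)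
    (h₂ : ∀ k : Fin N, (k : ℕ) < m → τ.2 k = τ'.2 k) (s s' : S) (a a' : A) :
    F (Fin.snoc τ.1 s, Fin.snoc τ.2 a) = F (Fin.snoc τ'.1 s', Fin.snoc τ'.2 a') := by
  refine hF _ _ (fun j hj => ?_) (fun k hk => ?_)
  · cases j using Fin.lastCases with
    | last => simp at hj; omega
    | cast j => simpa using h₁ j (by simpa using hj)
  · cases k using Fin.lastCases with
    | last => simp at hk; omega
    | cast k => simpa using h₂ k (by simpa using hk)

theorem sum_trajWeight_mul_congr [Fintype S] [Fintype A] (init : S → ℝ) {m : ℕ} :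
    ∀ {N : ℕ} {c c' : Fin N → S → A → S → ℝ} {F : Traj S A N → ℝ}, DependsOnPrefix m F →
      (∀ k : Fin N, (k : ℕ) < m → c k = c' k) →
      (∀ k : Fin N, m ≤ k → IsStochastic (c k)) → (∀ k : Fin N, m ≤ k → IsStochastic (c' k)) →
      ∑ τ, trajWeight init c τ * F τ = ∑ τ, trajWeight init c' τ * F τ
  | 0, c, c', F, _, _, _, _ => by simp [trajWeight]
  | N + 1, c, c', F, hF, hlt, hc, hc' => by
    rcases lt_or_ge N m with hNm | hmN
    · rw [funext fun k => hlt k (by omega)]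
    rcases isEmpty_or_nonempty (Traj S A (N + 1)) with hτ | ⟨⟨τ₀⟩⟩
    · simp
    set F' : Traj S A N → ℝ := fun τ => F (Fin.snoc τ.1 (τ₀.1 0), Fin.snoc τ.2 (τ₀.2 0))
    have hF' : ∀ τ s a, F (Fin.snoc τ.1 s, Fin.snoc τ.2 a) = F' τ := fun τ s a =>
      hF.snoc_eq hmN (fun _ _ => rfl) (fun _ _ => rfl) _ _ _ _
    rw [sum_trajWeight_mul_succ init (hc _ (by simpa using hmN)) hF',
      sum_trajWeight_mul_succ init (hc' _ (by simpa using hmN)) hF']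
    exact sum_trajWeight_mul_congr init (fun τ τ' h₁ h₂ => hF.snoc_eq hmN h₁ h₂ _ _ _ _)
      (fun k hk => hlt _ hk) (fun k hk => hc _ hk) (fun k hk => hc' _ hk)

end TrajectoryWeights

noncomputable section Policy

variable {S A G : Type}

def score (pol : ℝ → G → S → A → ℝ) (θ : ℝ) (g : G) (s : S) (a : A) : ℝ :=
  deriv (fun θ' => Real.log (pol θ' g s a)) θ

/-- The weight of the estimator: a trajectory generated under goal `x.2`, reweighted to goal `g`
on the decisions before step `t'`. -/
def pdWeight (n : ℕ) (pol : ℝ → G → S → A → ℝ) (θ : ℝ) (g : G) (t' : Fin (n + 1))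
    (x : Traj S A n × G) : ℝ :=
  ∏ k : Fin n, if k.castSucc < t' then
    pol θ g (x.1.1 k.castSucc) (x.1.2 k) / pol θ x.2 (x.1.1 k.castSucc) (x.1.2 k) else 1

def trajExpect [Fintype S] [Fintype A] (n : ℕ) (init : S → ℝ) (trans : S → A → S → ℝ)
    (pol : ℝ → G → S → A → ℝ) (θ : ℝ) (g : G) (F : Traj S A n → ℝ) : ℝ :=
  ∑ τ, trajProb n init trans pol θ g τ * F τ

variable (n : ℕ) (init : S → ℝ) (trans : S → A → S → ℝ) (pol : ℝ → G → S → A → ℝ) (θ : ℝ)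

theorem trajProb_mul_pdWeight {g' : G} (hpol0 : ∀ s a, pol θ g' s a ≠ 0) (g : G)
    (t' : Fin (n + 1)) (τ : Traj S A n) :
    trajProb n init trans pol θ g' τ * pdWeight n pol θ g t' (τ, g')
      = trajWeight init (fun k s a s' =>
          (if k.castSucc < t' then pol θ g s a else pol θ g' s a) * trans s a s') τ := by
  rw [trajProb, pdWeight, trajWeight, mul_assoc, ← prod_mul_distrib]
  congr 1
  refine prod_congr rfl fun k _ => ?_
  split_ifs
  · field_simp [hpol0]
  · ring

theorem trajProb_pos (hinit : ∀ s, 0 < init s) (htrans : ∀ s a s', 0 < trans s a s') {g : G}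
    (hpol : ∀ s a, 0 < pol θ g s a) (τ : Traj S A n) :
    0 < trajProb n init trans pol θ g τ :=
  mul_pos (hinit _) (prod_pos fun _ _ => mul_pos (hpol _ _) (htrans _ _ _))

variable [Fintype S] [Fintype A]

theorem isStochastic_mul {trans : S → A → S → ℝ} (htrans1 : ∀ s a, ∑ s', trans s a s' = 1)
    {p : S → A → ℝ} (hp : ∀ s, ∑ a, p s a = 1) :
    IsStochastic fun s a s' => p s a * trans s a s' := fun s => by
  simp only [← mul_sum, htrans1, mul_one, hp]

theorem trajExpect_one (hinit1 : ∑ s, init s = 1) (htrans1 : ∀ s a, ∑ s', trans s a s' = 1)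
    {g : G} (hpol1 : ∀ s, ∑ a, pol θ g s a = 1) :
    trajExpect n init trans pol θ g 1 = 1 := by
  simp only [trajExpect, Pi.one_apply, mul_one]
  exact (sum_trajWeight init fun _ => isStochastic_mul htrans1 hpol1).trans hinit1

theorem trajExpect_pdWeight_mul (htrans1 : ∀ s a, ∑ s', trans s a s' = 1)
    (hpol1 : ∀ g s, ∑ a, pol θ g s a = 1) {g' : G} (hpol0 : ∀ s a, pol θ g' s a ≠ 0) (g : G)
    {t' : Fin (n + 1)} {F : Traj S A n → ℝ} (hF : DependsOnPrefix t' F) :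
    trajExpect n init trans pol θ g' (fun τ => pdWeight n pol θ g t' (τ, g') * F τ)
      = trajExpect n init trans pol θ g F := by
  simp only [trajExpect, ← mul_assoc, trajProb_mul_pdWeight n init trans pol θ hpol0]
  refine sum_trajWeight_mul_congr init hF (fun k hk => ?_)
    (fun k _ => isStochastic_mul htrans1 fun s => ?_) fun _ _ => isStochastic_mul htrans1 (hpol1 g)
  · simp [Fin.lt_def, hk]
  · split_ifs
    exacts [hpol1 g s, hpol1 g' s]

end Policy

section Score

variable {S A G : Type} (n : ℕ) (init : S → ℝ) (trans : S → A → S → ℝ) (pol : ℝ → G → S → A → ℝ)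
  (θ : ℝ)

theorem pol_mul_score {g : G} {s : S} {a : A} (hpol0 : pol θ g s a ≠ 0)
    (hpold : DifferentiableAt ℝ (fun θ' => pol θ' g s a) θ) :
    pol θ g s a * score pol θ g s a = deriv (fun θ' => pol θ' g s a) θ := by
  rw [score, (hpold.hasDerivAt.log hpol0).deriv, mul_div_cancel₀ _ hpol0]

theorem hasDerivAt_trajProb {g : G} (hpol0 : ∀ s a, pol θ g s a ≠ 0)
    (hpold : ∀ s a, DifferentiableAt ℝ (fun θ' => pol θ' g s a) θ) (τ : Traj S A n) :
    HasDerivAt (fun θ' => trajProb n init trans pol θ' g τ)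
      (trajProb n init trans pol θ g τ * ∑ t : Fin n, score pol θ g (τ.1 t.castSucc) (τ.2 t))
      θ := by
  classical
  have h := (HasDerivAt.fun_finsetProd (u := univ) fun k _ =>
    ((hpold (τ.1 k.castSucc) (τ.2 k)).hasDerivAt.mul_const
      (trans (τ.1 k.castSucc) (τ.2 k) (τ.1 k.succ)))).const_mul (init (τ.1 0))
  refine h.congr_deriv ?_
  simp only [trajProb, mul_sum, smul_eq_mul]
  refine sum_congr rfl fun k _ => ?_
  rw [← pol_mul_score pol θ (hpol0 _ _) (hpold _ _), ← mul_prod_erase univ _ (mem_univ k)]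
  ring

variable [Fintype A]

theorem sum_pol_mul_score {g : G} {s : S} (hpol0 : ∀ a, pol θ g s a ≠ 0)
    (hpold : ∀ a, DifferentiableAt ℝ (fun θ' => pol θ' g s a) θ)
    (hpol1 : ∀ θ', ∑ a, pol θ' g s a = 1) :
    ∑ a, pol θ g s a * score pol θ g s a = 0 := by
  simp only [pol_mul_score pol θ (hpol0 _) (hpold _)]
  rw [← deriv_fun_sum fun a _ => hpold a]
  simp [hpol1]

variable [Fintype S]

theorem trajExpect_score_mul_eq_zero (htrans1 : ∀ s a, ∑ s', trans s a s' = 1) {g : G}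
    (hpol0 : ∀ s a, pol θ g s a ≠ 0) (hpold : ∀ s a, DifferentiableAt ℝ (fun θ' => pol θ' g s a) θ)
    (hpol1 : ∀ θ' s, ∑ a, pol θ' g s a = 1) (t : Fin n) {F : Traj S A n → ℝ}
    (hF : DependsOnPrefix t F) :
    trajExpect n init trans pol θ g (fun τ => score pol θ g (τ.1 t.castSucc) (τ.2 t) * F τ)
      = 0 := by
  set tilt : Fin n → S → A → ℝ := fun k s a => if k = t then 1 + score pol θ g s a else 1
  have hweight : ∀ τ : Traj S A n, trajProb n init trans pol θ g τ * tilt t (τ.1 t.castSucc) (τ.2 t)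
      = trajWeight init (fun k s a s' => (pol θ g s a * tilt k s a) * trans s a s') τ := by
    intro τ
    simp only [trajProb, trajWeight, mul_right_comm _ (tilt _ _ _), prod_mul_distrib, mul_assoc,
      tilt]
    simp
  have htilted : trajExpect n init trans pol θ g (fun τ => tilt t (τ.1 t.castSucc) (τ.2 t) * F τ)
      = trajExpect n init trans pol θ g F := by
    simp only [trajExpect, ← mul_assoc, hweight]
    refine sum_trajWeight_mul_congr init hF (fun k hk => ?_)
      (fun k _ => isStochastic_mul htrans1 fun s => ?_)
      fun _ _ => isStochastic_mul htrans1 (hpol1 θ)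
    · simp [tilt, Fin.ext_iff, hk.ne]
    · by_cases hk : k = t
      · simp [tilt, hk, mul_add, sum_add_distrib, hpol1,
          sum_pol_mul_score pol θ (hpol0 s) (hpold s)]
      · simp [tilt, hk, hpol1]
  simp only [trajExpect, tilt, if_pos, add_mul, one_mul, mul_add, sum_add_distrib] at htilted
  simp only [trajExpect]
  linarith

end Score

section Estimator

variable {S A G : Type} [Fintype S] [Fintype A] [Fintype G] (n : ℕ) (init : S → ℝ)
  (trans : S → A → S → ℝ) (pol : ℝ → G → S → A → ℝ) (pG : G → ℝ) (r : S → G → ℝ) (θ : ℝ)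

theorem hasDerivAt_expReturn (hpol0 : ∀ g s a, pol θ g s a ≠ 0)
    (hpold : ∀ g s a, DifferentiableAt ℝ (fun θ' => pol θ' g s a) θ) :
    HasDerivAt (expReturn n init trans pol pG r)
      (∑ g, pG g * ∑ t : Fin n, ∑ t' : Fin (n + 1), trajExpect n init trans pol θ g
        fun τ => score pol θ g (τ.1 t.castSucc) (τ.2 t) * r (τ.1 t') g) θ := by
  refine (HasDerivAt.fun_sum fun g _ => (HasDerivAt.fun_sum fun τ _ =>
    (hasDerivAt_trajProb n init trans pol θ (hpol0 g) (hpold g) τ).mul_const _).const_mul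
      (pG g)).congr_deriv (sum_congr rfl fun g _ => congrArg _ ?_)
  simp only [trajExpect, mul_sum, sum_mul, mul_assoc]
  rw [sum_congr rfl fun τ _ => sum_comm, sum_comm]
  exact sum_congr rfl fun t _ => sum_comm

theorem deriv_expReturn (htrans1 : ∀ s a, ∑ s', trans s a s' = 1)
    (hpol0 : ∀ g s a, pol θ g s a ≠ 0)
    (hpold : ∀ g s a, DifferentiableAt ℝ (fun θ' => pol θ' g s a) θ)
    (hpol1 : ∀ θ' g s, ∑ a, pol θ' g s a = 1) :
    deriv (expReturn n init trans pol pG r) θ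
      = ∑ g, pG g * ∑ t : Fin n,
          ∑ t' ∈ univ.filter (fun t' : Fin (n + 1) => t.castSucc < t'),
            trajExpect n init trans pol θ g
              fun τ => score pol θ g (τ.1 t.castSucc) (τ.2 t) * r (τ.1 t') g := by
  rw [(hasDerivAt_expReturn n init trans pol pG r θ hpol0 hpold).deriv]
  refine sum_congr rfl fun g _ => congrArg _ (sum_congr rfl fun t _ => ?_)
  rw [← sum_filter_add_sum_filter_not univ (fun t' : Fin (n + 1) => t.castSucc < t'),
    add_eq_left]
  refine sum_eq_zero fun t' ht' => trajExpect_score_mul_eq_zero n init trans pol θ htrans1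
    (hpol0 g) (hpold g) (fun θ' => hpol1 θ' g) t fun τ τ' h₁ _ => by
      rw [h₁ t' (by simpa [Fin.lt_def] using ht')]

theorem sum_goalMixture_pdWeight_mul (hpG1 : ∑ g, pG g = 1)
    (htrans1 : ∀ s a, ∑ s', trans s a s' = 1) (hpol0 : ∀ g s a, pol θ g s a ≠ 0)
    (hpol1 : ∀ g s, ∑ a, pol θ g s a = 1) (g : G) {t' : Fin (n + 1)} {F : Traj S A n → ℝ}
    (hF : DependsOnPrefix t' F) :
    ∑ x : Traj S A n × G,
        pG x.2 * trajProb n init trans pol θ x.2 x.1 * (pdWeight n pol θ g t' x * F x.1)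
      = trajExpect n init trans pol θ g F := by
  have hg' : ∀ g', ∑ τ, trajProb n init trans pol θ g' τ * (pdWeight n pol θ g t' (τ, g') * F τ)
      = trajExpect n init trans pol θ g F := fun g' =>
    trajExpect_pdWeight_mul n init trans pol θ htrans1 hpol1 (hpol0 g') g hF
  simp only [Fintype.sum_prod_type_right, mul_assoc, ← mul_sum, hg', ← sum_mul, hpG1, one_mul]

theorem sum_goalMixture_pdWeight (hinit1 : ∑ s, init s = 1) (hpG1 : ∑ g, pG g = 1)
    (htrans1 : ∀ s a, ∑ s', trans s a s' = 1) (hpol0 : ∀ g s a, pol θ g s a ≠ 0)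
    (hpol1 : ∀ g s, ∑ a, pol θ g s a = 1) (g : G) (t' : Fin (n + 1)) :
    ∑ x : Traj S A n × G,
      pG x.2 * trajProb n init trans pol θ x.2 x.1 * pdWeight n pol θ g t' x = 1 := by
  simpa [trajExpect_one n init trans pol θ hinit1 htrans1 (hpol1 g)] using
    sum_goalMixture_pdWeight_mul n init trans pol pG θ hpG1 htrans1 hpol0 hpol1 g
      (F := 1) fun _ _ _ _ => rfl

theorem sum_goalMixture_score_pdWeight (hpG1 : ∑ g, pG g = 1)
    (htrans1 : ∀ s a, ∑ s', trans s a s' = 1) (hpol0 : ∀ g s a, pol θ g s a ≠ 0)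
    (hpol1 : ∀ g s, ∑ a, pol θ g s a = 1) (g : G) {t : Fin n} {t' : Fin (n + 1)}
    (htt' : t.castSucc < t') :
    ∑ x : Traj S A n × G, pG x.2 * trajProb n init trans pol θ x.2 x.1 *
        (score pol θ g (x.1.1 t.castSucc) (x.1.2 t) * (pdWeight n pol θ g t' x * r (x.1.1 t') g))
      = trajExpect n init trans pol θ g
          fun τ => score pol θ g (τ.1 t.castSucc) (τ.2 t) * r (τ.1 t') g := by
  have htt : (t : ℕ) < t' := by simpa [Fin.lt_def] using htt'
  rw [← sum_goalMixture_pdWeight_mul n init trans pol pG θ hpG1 htrans1 hpol0 hpol1 g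
    (t' := t') fun τ τ' h₁ h₂ => by rw [h₁ _ (by simp; omega), h₂ t htt, h₁ t' le_rfl]]
  exact sum_congr rfl fun x _ => by ring

end Estimator

end Hindsight

open Hindsight

/-- strong consistency of the weighted per-decision hindsight policy
gradient estimator, in which for each alternative goal `g` and pair of time steps
`(t, t')` the importance weight of trajectory `i` is normalized by the sum of the
corresponding weights over all `N` trajectories. The estimator converges almost surely
to `∇η(θ)` as `N → ∞`. -/
theorem weighted_per_decision_hindsight_estimator_consistent {S A G : Type}
    [Fintype S] [Fintype A] [Fintype G]
    (n : ℕ) [MeasurableSpace (Traj S A n × G)] [DiscreteMeasurableSpace (Traj S A n × G)]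
    {Ω : Type} [MeasurableSpace Ω] (Pm : Measure Ω) [IsProbabilityMeasure Pm]
    (init : S → ℝ) (trans : S → A → S → ℝ) (pol : ℝ → G → S → A → ℝ)
    (pG : G → ℝ) (r : S → G → ℝ)
    (hinit : ∀ s, 0 < init s) (hinit1 : ∑ s : S, init s = 1)
    (htrans : ∀ s a s', 0 < trans s a s') (htrans1 : ∀ s a, ∑ s' : S, trans s a s' = 1)
    (hpol : ∀ (θ' : ℝ) (g : G) (s : S) (a : A), 0 < pol θ' g s a)
    (hpold : ∀ (g : G) (s : S) (a : A), Differentiable ℝ fun θ' => pol θ' g s a)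
    (hpol1 : ∀ (θ' : ℝ) (g : G) (s : S), ∑ a : A, pol θ' g s a = 1)
    (hpG : ∀ g, 0 ≤ pG g) (hpG1 : ∑ g : G, pG g = 1)
    (θ : ℝ) (X : ℕ → Ω → Traj S A n × G)
    (hXm : ∀ i, Measurable (X i))
    (hindep : iIndepFun X Pm)
    (hdist : ∀ i (x : Traj S A n × G),
      Pm.map (X i) {x} = ENNReal.ofReal (pG x.2 * trajProb n init trans pol θ x.2 x.1)) :
    ∀ᵐ ω ∂Pm, Tendsto
      (fun N : ℕ => ∑ i ∈ Finset.range N,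
        ∑ g : G, pG g * ∑ t : Fin n,
          deriv (fun θ'' => Real.log (pol θ'' g ((X i ω).1.1 t.castSucc) ((X i ω).1.2 t))) θ *
            ∑ t' ∈ Finset.univ.filter (fun t' : Fin (n + 1) => t.castSucc < t'),
              ((∏ k : Fin n,
                  if k.castSucc < t' then
                    pol θ g ((X i ω).1.1 k.castSucc) ((X i ω).1.2 k) /
                      pol θ (X i ω).2 ((X i ω).1.1 k.castSucc) ((X i ω).1.2 k)
                  else 1) *
                r ((X i ω).1.1 t') g) /
              (∑ j ∈ Finset.range N, ∏ k : Fin n,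
                  if k.castSucc < t' then
                    pol θ g ((X j ω).1.1 k.castSucc) ((X j ω).1.2 k) /
                      pol θ (X j ω).2 ((X j ω).1.1 k.castSucc) ((X j ω).1.2 k)
                  else 1))
      atTop (nhds (deriv (expReturn n init trans pol pG r) θ)) := by
  have hpol0 : ∀ g s a, pol θ g s a ≠ 0 := fun g s a => (hpol θ g s a).ne'
  have hP : ∀ x : Traj S A n × G, 0 ≤ pG x.2 * trajProb n init trans pol θ x.2 x.1 := fun x =>
    mul_nonneg (hpG _) (trajProb_pos n init trans pol θ hinit htrans (hpol θ x.2) x.1).le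
  have hlim := ae_tendsto_average_of_iIndepFun hXm hindep hP hdist
  filter_upwards [ae_all_iff.2 fun g : G => ae_all_iff.2 fun t : Fin n =>
    ae_all_iff.2 fun t' : Fin (n + 1) => (hlim fun x =>
      score pol θ g (x.1.1 t.castSucc) (x.1.2 t) * (pdWeight n pol θ g t' x * r (x.1.1 t') g)).and
      (hlim (pdWeight n pol θ g t'))] with ω hω
  rw [deriv_expReturn n init trans pol pG r θ htrans1 hpol0
    (fun g s a => (hpold g s a).differentiableAt) hpol1]
  refine (tendsto_finsetSum _ fun g _ => (tendsto_finsetSum _ fun t _ =>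
    tendsto_finsetSum _ fun t' ht' => ?_).const_mul (pG g)).congr fun N =>
      (sum_sum_mul_sum_div _ _ _ _ _ _ _ _).symm
  have hden :=
    sum_goalMixture_pdWeight n init trans pol pG θ hinit1 hpG1 htrans1 hpol0 (hpol1 θ) g t'
  have h := tendsto_div_of_tendsto_div_natCast (hω g t t').1 (hω g t t').2 (by simp [hden])
  rwa [sum_goalMixture_score_pdWeight n init trans pol pG r θ hpG1 htrans1 hpol0 (hpol1 θ) g
    (mem_filter.1 ht').2, hden, div_one] at h
end

section
/- Almost-sure vanishing of the weighted baseline estimator: the estimator Σ_i Σ_g p(g) Σ_{t=1}^{T−1} ∇ log p(a_t^(i)|s_t^(i),g,θ) · w_t^(i)(g) b_t^θ(s_t^(i), g) / Σ_j w_t^(j)(g), where w_t^(i)(g) = ∏_{k=1}^t p(a_k^(i)|s_k^(i),g,θ)/p(a_k^(i)|s_k^(i),g^(i),θ), converges almost surely to the zero vector as N → ∞. -/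
open Finset

open MeasureTheory ProbabilityTheory Filter

open scoped Topology

/-!
By the strong law of large numbers, the averages `(1/N) ∑ᵢ f(X i)` of the numerator terms and of
the weights converge almost surely to their expectations, so each ratio in the estimator tends to
the ratio of the expectations. Under a trajectory drawn for goal `g'`, the weight `w_t(g)` turns
the policy for `g'` into the policy for `g` at the steps `k ≤ t`; since the dynamics are stochastic,
`E[w_t(g) E(s_t, a_t)] = c` whenever `∑ₐ π(a ∣ s, g) E(s, a) = c` for every state `s`. For `E = 1`
this gives `E[w_t(g)] = 1`, and for `E = ∂_θ log π(a ∣ s, g) b_t(s, g)` it gives `0`, because the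
score has mean zero under the policy. Hence every ratio tends to `0 / 1 = 0`.
-/

section PathSum

variable {S A : Type} [Fintype S] [Fintype A]

def pathSum (m : ℕ) (ν : S → ℝ) (K : Fin m → S → A → S → ℝ) : ℝ :=
  ∑ s : Fin (m + 1) → S, ∑ a : Fin m → A,
    ν (s 0) * ∏ k : Fin m, K k (s k.castSucc) (a k) (s k.succ)

lemma sum_fun_fin_succ {α : Type} [Fintype α] {m : ℕ} (F : (Fin (m + 1) → α) → ℝ) :
    ∑ f, F f = ∑ x : α, ∑ f : Fin m → α, F (Fin.cons x f) := by
  rw [← (Fin.consEquiv fun _ => α).sum_comp, Fintype.sum_prod_type]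
  rfl

lemma pathSum_zero (ν : S → ℝ) (K : Fin 0 → S → A → S → ℝ) : pathSum 0 ν K = ∑ s, ν s := by
  simpa [pathSum] using Fintype.sum_equiv (Equiv.funUnique (Fin 1) S) _ _ fun _ => rfl

lemma pathSum_succ (m : ℕ) (ν : S → ℝ) (K : Fin (m + 1) → S → A → S → ℝ) :
    pathSum (m + 1) ν K =
      pathSum m (fun s' => ∑ s, ∑ a, ν s * K 0 s a s') fun k => K k.succ := by
  simp only [pathSum, sum_fun_fin_succ (m := m + 1), sum_fun_fin_succ (m := m), Fin.prod_univ_succ,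
    Fin.cons_zero, Fin.cons_succ, ← Fin.succ_castSucc, Fin.castSucc_zero, Finset.sum_mul, mul_assoc]
  rw [sum_comm]
  refine sum_congr rfl fun _ _ => ?_
  rw [sum_comm]
  exact sum_congr rfl fun _ _ => (sum_congr rfl fun _ _ => sum_comm).trans sum_comm

lemma pathSum_eq_prod_mul_sum {m : ℕ} (ν : S → ℝ) (K : Fin m → S → A → S → ℝ) (c : Fin m → ℝ)
    (hK : ∀ k s, ∑ a, ∑ s', K k s a s' = c k) :
    pathSum m ν K = (∏ k, c k) * ∑ s, ν s := by
  induction m generalizing ν with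
  | zero => simp [pathSum_zero]
  | succ m ih =>
    have hstep : ∑ s', ∑ s, ∑ a, ν s * K 0 s a s' = c 0 * ∑ s, ν s := by
      simp only [sum_comm (γ := S), ← mul_sum, hK, sum_mul, mul_comm]
    rw [pathSum_succ, ih _ _ _ fun k => hK k.succ, hstep, Fin.prod_univ_succ]
    ring

end PathSum

lemma sum_mul_deriv_log_eq_zero {ι : Type} [Fintype ι] (p : ι → ℝ → ℝ) (θ : ℝ)
    (hpos : ∀ i, p i θ ≠ 0) (hdiff : ∀ i, DifferentiableAt ℝ (p i) θ)
    (hsum : ∀ θ', ∑ i, p i θ' = 1) :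
    ∑ i, p i θ * deriv (fun θ' => Real.log (p i θ')) θ = 0 := by
  have hconst : deriv (fun θ' => ∑ i, p i θ') θ = 0 := by simp [hsum]
  rw [deriv_fun_sum fun i _ => hdiff i] at hconst
  rw [← hconst]
  refine sum_congr rfl fun i _ => ?_
  rw [deriv.log (hdiff i) (hpos i), mul_div_cancel₀ _ (hpos i)]

section Probability

variable {Ω α : Type} [MeasurableSpace Ω] [MeasurableSpace α] [DiscreteMeasurableSpace α]
  {μ : Measure Ω}

lemma integral_comp_eq_sum [Fintype α] [IsFiniteMeasure μ] {X : Ω → α} (hX : Measurable X)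
    {p : α → ℝ} (hp : ∀ x, 0 ≤ p x) (hdist : ∀ x, μ.map X {x} = ENNReal.ofReal (p x))
    (h : α → ℝ) : ∫ ω, h (X ω) ∂μ = ∑ x, p x * h x := by
  rw [← integral_map hX.aemeasurable Measurable.of_discrete.aestronglyMeasurable,
    integral_fintype .of_finite]
  simp only [measureReal_def, hdist, ENNReal.toReal_ofReal (hp _), smul_eq_mul]

lemma ae_tendsto_average_comp [Finite α] [IsFiniteMeasure μ] {X : ℕ → Ω → α}
    (hindep : Pairwise fun i j => X i ⟂ᵢ[μ] X j) (hident : ∀ i, IdentDistrib (X i) (X 0) μ μ)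
    (h : α → ℝ) :
    ∀ᵐ ω ∂μ, Tendsto (fun N : ℕ => (∑ i ∈ range N, h (X i ω)) / N) atTop
      (𝓝 (∫ ω, h (X 0 ω) ∂μ)) :=
  strong_law_ae_real (fun i => h ∘ X i)
    (Integrable.of_finite.comp_aemeasurable (hident 0).aemeasurable_fst)
    (fun _ _ hij => (hindep hij).comp Measurable.of_discrete Measurable.of_discrete)
    fun i => (hident i).comp Measurable.of_discrete

end Probability

lemma tendsto_sum_div_sum_of_tendsto_average {u v : ℕ → ℝ} {a b : ℝ}
    (hu : Tendsto (fun N : ℕ => (∑ i ∈ range N, u i) / N) atTop (𝓝 a))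
    (hv : Tendsto (fun N : ℕ => (∑ i ∈ range N, v i) / N) atTop (𝓝 b)) (hb : b ≠ 0) :
    Tendsto (fun N => (∑ i ∈ range N, u i) / ∑ i ∈ range N, v i) atTop (𝓝 (a / b)) := by
  refine (hu.div hv hb).congr' ?_
  filter_upwards [eventually_ne_atTop 0] with N hN
  exact div_div_div_cancel_right₀ (Nat.cast_ne_zero.mpr hN) _ _

lemma tendsto_sum_sum_mul_sum_div_sum {ι κ : Type} [Fintype ι] [Fintype κ] (c : ι → ℝ)
    {u v : ι → κ → ℕ → ℝ} {a b : ι → κ → ℝ}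
    (hu : ∀ g t, Tendsto (fun N : ℕ => (∑ i ∈ range N, u g t i) / N) atTop (𝓝 (a g t)))
    (hv : ∀ g t, Tendsto (fun N : ℕ => (∑ i ∈ range N, v g t i) / N) atTop (𝓝 (b g t)))
    (hb : ∀ g t, b g t ≠ 0) :
    Tendsto (fun N => ∑ i ∈ range N, ∑ g, c g * ∑ t, u g t i / ∑ j ∈ range N, v g t j) atTop
      (𝓝 (∑ g, c g * ∑ t, a g t / b g t)) := by
  have hswap : ∀ N, ∑ i ∈ range N, ∑ g, c g * ∑ t, u g t i / ∑ j ∈ range N, v g t j =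
      ∑ g, c g * ∑ t, (∑ i ∈ range N, u g t i) / ∑ j ∈ range N, v g t j := fun N => by
    simp only [mul_sum, sum_div]
    rw [sum_comm]
    exact sum_congr rfl fun _ _ => sum_comm
  simp only [hswap]
  exact tendsto_finsetSum _ fun g _ => (tendsto_finsetSum _ fun t _ =>
    tendsto_sum_div_sum_of_tendsto_average (hu g t) (hv g t) (hb g t)).const_mul (c g)

section Hindsight

variable {S A G : Type} {n : ℕ}

noncomputable def importanceWeight (pol : ℝ → G → S → A → ℝ) (θ : ℝ) (g : G) (t : Fin n)
    (x : Traj S A n × G) : ℝ :=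
  ∏ k : Fin n, if k ≤ t then
    pol θ g (x.1.1 k.castSucc) (x.1.2 k) / pol θ x.2 (x.1.1 k.castSucc) (x.1.2 k) else 1

noncomputable def baselineTerm (pol : ℝ → G → S → A → ℝ) (θ : ℝ) (b : Fin n → S → G → ℝ)
    (g : G) (t : Fin n) (x : Traj S A n × G) : ℝ :=
  deriv (fun θ' => Real.log (pol θ' g (x.1.1 t.castSucc) (x.1.2 t))) θ *
    (importanceWeight pol θ g t x * b t (x.1.1 t.castSucc) g)

variable [Fintype S] [Fintype A] {init : S → ℝ} {trans : S → A → S → ℝ}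
  {pol : ℝ → G → S → A → ℝ} {θ : ℝ} {t : Fin n}

lemma sum_trajProb_mul_importanceWeight_mul {g g' : G} {E : S → A → ℝ} {c : ℝ}
    (hinit1 : ∑ s, init s = 1) (htrans1 : ∀ s a, ∑ s', trans s a s' = 1)
    (hpol : ∀ s a, pol θ g' s a ≠ 0) (hpol1 : ∀ g s, ∑ a, pol θ g s a = 1)
    (hE : ∀ s, ∑ a, pol θ g s a * E s a = c) :
    ∑ τ, trajProb n init trans pol θ g' τ *
      (importanceWeight pol θ g t (τ, g') * E (τ.1 t.castSucc) (τ.2 t)) = c := by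
  -- The weighted path is a path of kernels using the policy for `g` up to time `t`, with the
  -- factor `E` at time `t`: every row sum is `1` except at time `t`, where it is `c`.
  set K : Fin n → S → A → S → ℝ := fun k s a s' =>
    (if k ≤ t then pol θ g s a else pol θ g' s a) * trans s a s' *
      (if k = t then E s a else 1) with hK
  have hpath : ∑ τ, trajProb n init trans pol θ g' τ *
      (importanceWeight pol θ g t (τ, g') * E (τ.1 t.castSucc) (τ.2 t)) = pathSum n init K := by
    rw [pathSum, Fintype.sum_prod_type]
    refine sum_congr rfl fun s _ => sum_congr rfl fun a _ => ?_
    rw [trajProb, importanceWeight, ← Fintype.prod_ite_eq' t fun k => E (s k.castSucc) (a k),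
      mul_assoc, ← prod_mul_distrib, ← prod_mul_distrib]
    congr 1
    refine prod_congr rfl fun k _ => ?_
    by_cases hkt : k ≤ t
    · simp only [hK, if_pos hkt]
      field_simp [hpol]
    · simp only [hK, if_neg hkt]
      ring
  have hrow : ∀ k s, ∑ a, ∑ s', K k s a s' = if k = t then c else 1 := by
    intro k s
    simp only [hK, ← sum_mul, ← mul_sum, htrans1, mul_one]
    split_ifs with hle heq heq
    · exact hE s
    · simp only [mul_one, hpol1]
    · exact absurd heq.le hle
    · simp only [mul_one, hpol1]
  rw [hpath, pathSum_eq_prod_mul_sum init K _ hrow, Fintype.prod_ite_eq', hinit1, mul_one]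

variable [Fintype G] {pG : G → ℝ} {g : G}

lemma sum_mul_importanceWeight_mul {E : S → A → ℝ} {c : ℝ} (hinit1 : ∑ s, init s = 1) (htrans1 : ∀ s a, ∑ s', trans s a s' = 1)
    (hpol : ∀ g s a, pol θ g s a ≠ 0) (hpol1 : ∀ g s, ∑ a, pol θ g s a = 1)
    (hpG1 : ∑ g, pG g = 1) (hE : ∀ s, ∑ a, pol θ g s a * E s a = c) :
    ∑ x : Traj S A n × G, pG x.2 * trajProb n init trans pol θ x.2 x.1 *
      (importanceWeight pol θ g t x * E (x.1.1 t.castSucc) (x.1.2 t)) = c := by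
  rw [Fintype.sum_prod_type_right]
  simp only [mul_assoc, ← mul_sum,
    sum_trajProb_mul_importanceWeight_mul hinit1 htrans1 (hpol _) hpol1 hE, ← sum_mul, hpG1,
    one_mul]

lemma sum_mul_importanceWeight (hinit1 : ∑ s, init s = 1)
    (htrans1 : ∀ s a, ∑ s', trans s a s' = 1)
    (hpol : ∀ g s a, pol θ g s a ≠ 0) (hpol1 : ∀ g s, ∑ a, pol θ g s a = 1)
    (hpG1 : ∑ g, pG g = 1) :
    ∑ x : Traj S A n × G, pG x.2 * trajProb n init trans pol θ x.2 x.1 *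
      importanceWeight pol θ g t x = 1 := by
  simpa using sum_mul_importanceWeight_mul (E := fun _ _ => 1) hinit1 htrans1 hpol hpol1 hpG1
    fun s => by simp [hpol1]

lemma sum_mul_baselineTerm {b : Fin n → S → G → ℝ} (hinit1 : ∑ s, init s = 1)
    (htrans1 : ∀ s a, ∑ s', trans s a s' = 1) (hpol : ∀ g s a, pol θ g s a ≠ 0)
    (hdiff : ∀ g s a, DifferentiableAt ℝ (fun θ' => pol θ' g s a) θ)
    (hpol1 : ∀ θ' g s, ∑ a, pol θ' g s a = 1) (hpG1 : ∑ g, pG g = 1) :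
    ∑ x : Traj S A n × G, pG x.2 * trajProb n init trans pol θ x.2 x.1 *
      baselineTerm pol θ b g t x = 0 := by
  have hE : ∀ s, ∑ a, pol θ g s a *
      (deriv (fun θ' => Real.log (pol θ' g s a)) θ * b t s g) = 0 := fun s => by
    simp only [← mul_assoc, ← sum_mul, zero_mul, sum_mul_deriv_log_eq_zero
      (fun a θ' => pol θ' g s a) θ (hpol g s) (hdiff g s) (hpol1 · g s)]
  rw [← sum_mul_importanceWeight_mul (t := t) hinit1 htrans1 hpol (hpol1 θ) hpG1 hE]
  exact sum_congr rfl fun x _ => by rw [baselineTerm]; ring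

end Hindsight

/-- almost-sure vanishing of the weighted baseline estimator.
With weights `w_t⁽ⁱ⁾(g) = ∏_{k=1}^{t} p(a_k⁽ⁱ⁾∣s_k⁽ⁱ⁾,g,θ)/p(a_k⁽ⁱ⁾∣s_k⁽ⁱ⁾,g⁽ⁱ⁾,θ)`,
the estimator `∑_i ∑_g p(g) ∑_{t=1}^{T-1} ∇ log p(a_t⁽ⁱ⁾∣s_t⁽ⁱ⁾,g,θ) ⬝
w_t⁽ⁱ⁾(g) b_t^θ(s_t⁽ⁱ⁾, g) / ∑_j w_t⁽ʲ⁾(g)` converges almost surely to zero as `N → ∞`. -/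
theorem weighted_baseline_estimator_vanishes {S A G : Type}
    [Fintype S] [Fintype A] [Fintype G]
    (n : ℕ) [MeasurableSpace (Traj S A n × G)] [DiscreteMeasurableSpace (Traj S A n × G)]
    {Ω : Type} [MeasurableSpace Ω] (Pm : Measure Ω) [IsProbabilityMeasure Pm]
    (init : S → ℝ) (trans : S → A → S → ℝ) (pol : ℝ → G → S → A → ℝ)
    (pG : G → ℝ)
    (hinit : ∀ s, 0 < init s) (hinit1 : ∑ s : S, init s = 1)
    (htrans : ∀ s a s', 0 < trans s a s') (htrans1 : ∀ s a, ∑ s' : S, trans s a s' = 1)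
    (hpol : ∀ (θ' : ℝ) (g : G) (s : S) (a : A), 0 < pol θ' g s a)
    (hpold : ∀ (g : G) (s : S) (a : A), Differentiable ℝ fun θ' => pol θ' g s a)
    (hpol1 : ∀ (θ' : ℝ) (g : G) (s : S), ∑ a : A, pol θ' g s a = 1)
    (hpG : ∀ g, 0 ≤ pG g) (hpG1 : ∑ g : G, pG g = 1)
    (θ : ℝ) (b : Fin n → S → G → ℝ) (X : ℕ → Ω → Traj S A n × G)
    (hXm : ∀ i, Measurable (X i))
    (hindep : iIndepFun X Pm)
    (hdist : ∀ i (x : Traj S A n × G),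
      Pm.map (X i) {x} = ENNReal.ofReal (pG x.2 * trajProb n init trans pol θ x.2 x.1)) :
    ∀ᵐ ω ∂Pm, Tendsto
      (fun N : ℕ => ∑ i ∈ Finset.range N,
        ∑ g : G, pG g * ∑ t : Fin n,
          deriv (fun θ'' => Real.log (pol θ'' g ((X i ω).1.1 t.castSucc) ((X i ω).1.2 t))) θ *
            (((∏ k : Fin n,
                  if k ≤ t then
                    pol θ g ((X i ω).1.1 k.castSucc) ((X i ω).1.2 k) /
                      pol θ (X i ω).2 ((X i ω).1.1 k.castSucc) ((X i ω).1.2 k)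
                  else 1) *
                b t ((X i ω).1.1 t.castSucc) g) /
              (∑ j ∈ Finset.range N, ∏ k : Fin n,
                  if k ≤ t then
                    pol θ g ((X j ω).1.1 k.castSucc) ((X j ω).1.2 k) /
                      pol θ (X j ω).2 ((X j ω).1.1 k.castSucc) ((X j ω).1.2 k)
                  else 1)))
      atTop (nhds 0) := by
  set p : Traj S A n × G → ℝ := fun x => pG x.2 * trajProb n init trans pol θ x.2 x.1
  have hp : ∀ x, 0 ≤ p x := fun x => mul_nonneg (hpG _) <| (mul_pos (hinit _) <|
    prod_pos fun _ _ => mul_pos (hpol _ _ _ _) (htrans _ _ _)).le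
  have hident : ∀ i, IdentDistrib (X i) (X 0) Pm Pm := fun i =>
    ⟨(hXm i).aemeasurable, (hXm 0).aemeasurable,
      Measure.ext_of_singleton fun x => by rw [hdist i x, hdist 0 x]⟩
  have hslln : ∀ h : Traj S A n × G → ℝ, ∀ᵐ ω ∂Pm,
      Tendsto (fun N : ℕ => (∑ i ∈ range N, h (X i ω)) / N) atTop (𝓝 (∑ x, p x * h x)) :=
    fun h => by
      simpa only [integral_comp_eq_sum (hXm 0) hp (hdist 0)] using
        ae_tendsto_average_comp (fun _ _ hij => hindep.indepFun hij) hident h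
  have hpol0 : ∀ g s a, pol θ g s a ≠ 0 := fun g s a => (hpol θ g s a).ne'
  have hlim : ∀ᵐ ω ∂Pm, ∀ g t,
      Tendsto (fun N : ℕ => (∑ i ∈ range N, baselineTerm pol θ b g t (X i ω)) / N) atTop (𝓝 0) ∧
      Tendsto (fun N : ℕ => (∑ i ∈ range N, importanceWeight pol θ g t (X i ω)) / N) atTop
        (𝓝 1) := by
    simp only [ae_all_iff]
    intro g t
    filter_upwards [hslln (baselineTerm pol θ b g t), hslln (importanceWeight pol θ g t)]
      with ω hf hw
    rw [sum_mul_baselineTerm hinit1 htrans1 hpol0 (fun g s a => hpold g s a θ) hpol1 hpG1] at hf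
    rw [sum_mul_importanceWeight hinit1 htrans1 hpol0 (hpol1 θ) hpG1] at hw
    exact ⟨hf, hw⟩
  filter_upwards [hlim] with ω hω
  simpa only [baselineTerm, importanceWeight, mul_div_assoc, zero_div, sum_const_zero, mul_zero]
    using tendsto_sum_sum_mul_sum_div_sum pG (fun g t => (hω g t).1) (fun g t => (hω g t).2)
      fun _ _ => one_ne_zero
end
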